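/- arXiv:2405.01339 — 4 statements merged into one kernel-verified Lean document; each statement's English description precedes it below -/
import Mathlib

section
/- There is an absolute constant c > 0 such that for all sufficiently small ε > 0 the following holds. Let n = ⌈ε^{-2}⌉ and let A = {e_1,…,e_n} ⊂ ℝ^n be the standard unit basis vectors. Then every subset Ω ⊆ A equipped with non-negative weights that is an ε-coreset of A for 1-means (k = 1) satisfies |Ω| ≥ c·ε^{-2}. -/
/-!
Encode the coreset as a weight vector `u` on all `n` basis vectors, zero off its support `I`.
Its cost excess at a center `s` is `(∑ u - n) (1 + ‖s‖²) + 2 ⟪1 - u, s⟫`. The center `0` gives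
`∑ u ≈ n`; comparing `s` with `-s` bounds the linear part, and testing it at a multiple of `1 - u`
gives `‖1 - u‖² ≤ ε² n² ≤ n + O(1)`. Each of the `n - |I|` basis vectors outside `I` contributes
`1` to `‖1 - u‖²`, so `∑_{i ∈ I} (1 - u i)² ≤ |I| + O(1)`, while `∑_{i ∈ I} (1 - u i) = |I| - ∑ u`.
Cauchy–Schwarz on `I` then gives `(n - |I|)² ≲ |I| (|I| + O(1))`, i.e. `|I| ≳ n / 2`.
-/

open Finset

noncomputable section

theorem norm_sq_le_sq_of_two_mul_abs_inner_le {E : Type*} [NormedAddCommGroup E]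
    [InnerProductSpace ℝ E] {d : E} {a : ℝ} (ha : 0 < a)
    (h : ∀ s : E, 2 * |inner ℝ d s| ≤ a * (1 + ‖s‖ ^ 2)) : ‖d‖ ^ 2 ≤ a ^ 2 := by
  have key := h (a⁻¹ • d)
  rw [real_inner_smul_right, real_inner_self_eq_norm_sq, norm_smul, Real.norm_eq_abs,
    abs_of_pos (inv_pos.mpr ha), abs_of_nonneg (by positivity)] at key
  field_simp at key
  nlinarith

namespace EuclideanSpace

variable {ι : Type*} [Fintype ι] [DecidableEq ι]

theorem norm_single_one_sub_sq (i : ι) (s : EuclideanSpace ℝ ι) :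
    ‖single i (1 : ℝ) - s‖ ^ 2 = 1 - 2 * s i + ‖s‖ ^ 2 := by
  rw [norm_sub_sq_real, inner_single_left, PiLp.norm_single]
  simp

theorem sum_mul_norm_single_one_sub_sq (u : ι → ℝ) (s : EuclideanSpace ℝ ι) :
    ∑ j, u j * ‖single j (1 : ℝ) - s‖ ^ 2
      = (∑ j, u j) * (1 + ‖s‖ ^ 2) - 2 * inner ℝ (WithLp.toLp 2 u) s := by
  simp only [norm_single_one_sub_sq, PiLp.inner_apply, sum_mul, mul_sum, ← sum_sub_distrib]
  refine sum_congr rfl fun j _ => ?_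
  simp only [conj_trivial, RCLike.inner_apply]
  ring

end EuclideanSpace

theorem sq_sum_sub_card_le {ι : Type*} [Fintype ι] [DecidableEq ι] {I : Finset ι}
    {u : ι → ℝ} (hu : ∀ j ∉ I, u j = 0) :
    (∑ j, u j - (#I : ℝ)) ^ 2 ≤ #I * (∑ j, (1 - u j) ^ 2 - ((Fintype.card ι : ℝ) - #I)) := by
  have hsum : ∑ j, u j = ∑ j ∈ I, u j :=
    (sum_subset (subset_univ I) fun j _ hj => hu j hj).symm
  have hsq : ∑ j, (1 - u j) ^ 2 = ∑ j ∈ I, (1 - u j) ^ 2 + ((Fintype.card ι : ℝ) - #I) := by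
    rw [← sum_add_sum_compl I, add_right_inj, sum_congr rfl fun j hj => by
      rw [hu j (mem_compl.mp hj)]]
    simp [card_compl, Nat.cast_sub (card_le_univ I)]
  have cauchy_schwarz := sq_sum_le_card_mul_sum_sq (s := I) (f := fun j => 1 - u j)
  rw [sum_sub_distrib, sum_const, nsmul_one] at cauchy_schwarz
  rw [hsum, hsq, add_sub_cancel_right]
  nlinarith

open EuclideanSpace in
/-- Weights `u` on the standard basis of `ℝ^ι` (weight `0` for the points left out) forming an
`ε`-coreset of that basis for 1-means. -/
def IsSimplexCoreset {ι : Type*} [Fintype ι] [DecidableEq ι] (u : ι → ℝ) (ε : ℝ) : Prop :=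
  ∀ s : EuclideanSpace ℝ ι,
    |∑ j, u j * ‖single j (1 : ℝ) - s‖ ^ 2 - ∑ j, ‖single j (1 : ℝ) - s‖ ^ 2|
      ≤ ε * ∑ j, ‖single j (1 : ℝ) - s‖ ^ 2

namespace IsSimplexCoreset

open EuclideanSpace

variable {ι : Type*} [Fintype ι] [DecidableEq ι] {u : ι → ℝ} {ε : ℝ}

theorem abs_sum_sub_card_le (h : IsSimplexCoreset u ε) :
    |∑ j, u j - Fintype.card ι| ≤ ε * Fintype.card ι := by
  simpa [norm_single_one_sub_sq] using h 0

theorem sum_one_sub_sq_le [Nonempty ι] (h : IsSimplexCoreset u ε) (hε : 0 < ε) :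
    ∑ j, (1 - u j) ^ 2 ≤ (ε * Fintype.card ι) ^ 2 := by
  set n : ℝ := (Fintype.card ι : ℝ)
  have cost (s : EuclideanSpace ℝ ι) : ∑ j, ‖single j (1 : ℝ) - s‖ ^ 2
      = n * (1 + ‖s‖ ^ 2) - 2 * inner ℝ (WithLp.toLp 2 1) s := by
    simpa [n] using sum_mul_norm_single_one_sub_sq 1 s
  have excess (s : EuclideanSpace ℝ ι) :
      ∑ j, u j * ‖single j (1 : ℝ) - s‖ ^ 2 - ∑ j, ‖single j (1 : ℝ) - s‖ ^ 2
        = (∑ j, u j - n) * (1 + ‖s‖ ^ 2) + 2 * inner ℝ (WithLp.toLp 2 (1 - u)) s := by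
    rw [sum_mul_norm_single_one_sub_sq, cost, WithLp.toLp_sub, inner_sub_left]
    ring
  -- comparing the centers `s` and `-s` isolates the part of the excess that is linear in `s`
  have linear_le (s : EuclideanSpace ℝ ι) :
      2 * |inner ℝ (WithLp.toLp 2 (1 - u)) s| ≤ ε * n * (1 + ‖s‖ ^ 2) := by
    have hs := abs_le.mp (h s)
    have hs' := abs_le.mp (h (-s))
    rw [excess, cost] at hs hs'
    simp only [norm_neg, inner_neg_right] at hs'
    rw [← abs_two, ← abs_mul, abs_le]
    constructor <;> nlinarith
  have := norm_sq_le_sq_of_two_mul_abs_inner_le (by positivity) linear_le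
  simpa [EuclideanSpace.norm_sq_eq] using this

theorem card_div_four_le_card [Nonempty ι] (h : IsSimplexCoreset u ε) (hε : 0 < ε)
    (hε₀ : ε < 1 / 10) (hn : ε ^ 2 * Fintype.card ι ≤ 1 + ε ^ 2) {I : Finset ι}
    (hu : ∀ j ∉ I, u j = 0) :
    (Fintype.card ι : ℝ) / 4 ≤ #I := by
  have hW := abs_le.mp h.abs_sum_sub_card_le
  have hD := h.sum_one_sub_sq_le hε
  have hcs := sq_sum_sub_card_le hu
  set n : ℝ := (Fintype.card ι : ℝ)
  set W := ∑ j, u j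
  set m : ℝ := (#I : ℝ)
  have hn_pos : 1 ≤ n := Nat.one_le_cast.mpr Fintype.card_pos
  have hm_nonneg : 0 ≤ m := (#I).cast_nonneg
  have hD_sub : ∑ j, (1 - u j) ^ 2 - n ≤ 2 := by nlinarith
  have hcs' : (W - m) ^ 2 ≤ m * (m + 2) := by
    nlinarith [mul_le_mul_of_nonneg_left hD_sub hm_nonneg]
  have hW_large : 9 / 10 * n ≤ W := by nlinarith [hW.1]
  by_contra! hm
  have : (13 / 20 * n) ^ 2 ≤ (W - m) ^ 2 := pow_le_pow_left₀ (by positivity) (by linarith) 2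
  nlinarith [mul_le_mul_of_nonneg_left hm.le hm_nonneg]

end IsSimplexCoreset

/-- Any 1-means coreset of the `n`-dimensional simplex (standard basis vectors,
`n = ⌈ε^{-2}⌉`) consisting of non-negatively weighted input points must have
size `Ω(ε^{-2})`. -/
theorem simplex_coreset_lower_bound :
    ∃ c : ℝ, 0 < c ∧
      ∃ ε₀ : ℝ, 0 < ε₀ ∧
        ∀ ε : ℝ, 0 < ε → ε < ε₀ →
          ∀ n : ℕ, n = ⌈ε ^ (-2 : ℤ)⌉₊ →
            -- a weighted subset of the standard basis `A = {e_1, …, e_n}`,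
            -- identified with its index set `I`
            ∀ (I : Finset (Fin n)) (w : Fin n → ℝ),
              (∀ i ∈ I, 0 ≤ w i) →
              -- ε-coreset for 1-means: every center `s` has its cost preserved
              (∀ s : EuclideanSpace ℝ (Fin n),
                |(∑ i ∈ I, w i * ‖EuclideanSpace.single i (1 : ℝ) - s‖ ^ 2) -
                    ∑ i : Fin n, ‖EuclideanSpace.single i (1 : ℝ) - s‖ ^ 2|
                  ≤ ε * ∑ i : Fin n, ‖EuclideanSpace.single i (1 : ℝ) - s‖ ^ 2) →
              c * ε ^ (-2 : ℤ) ≤ (I.card : ℝ) := by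
  refine ⟨1 / 4, by norm_num, 1 / 10, by norm_num, ?_⟩
  rintro ε hε hε₀ n hn I w - hcoreset
  rw [zpow_neg, zpow_two, ← sq] at hn ⊢
  have hn_ge : (ε ^ 2)⁻¹ ≤ n := hn ▸ Nat.le_ceil _
  have hn_le : ε ^ 2 * n ≤ 1 + ε ^ 2 := by
    have := mul_le_mul_of_nonneg_left (hn ▸ Nat.ceil_lt_add_one (by positivity)).le (sq_nonneg ε)
    rwa [mul_add, mul_inv_cancel₀ (by positivity), mul_one] at this
  have : Nonempty (Fin n) :=
    ⟨⟨0, by exact_mod_cast (by positivity : (0 : ℝ) < (ε ^ 2)⁻¹).trans_le hn_ge⟩⟩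
  let u : Fin n → ℝ := fun j => if j ∈ I then w j else 0
  have hu : IsSimplexCoreset u ε := fun s => by
    simpa only [u, ite_mul, zero_mul, sum_ite_mem_eq] using hcoreset s
  have hI := hu.card_div_four_le_card hε hε₀ (by simpa using hn_le) fun j hj => if_neg hj
  rw [Fintype.card_fin] at hI
  linarith
end
end

section
/- Let ε ∈ (0,1) and let P ⊂ ℝ^d be a finite set that is β-stable for k-means with β > 512·ε^{-2}. Let {C_1,…,C_k} be an optimal k-means clustering of P with centers μ_1,…,μ_k (the centroids of the clusters) and let Δ = cost(P,{μ_1,…,μ_k}). Then the weighted set Ω = {μ_1,…,μ_k}, where μ_i carries weight |C_i|, together with the offset Δ, is an ε-coreset with offset of P: for every set S of k centers in ℝ^d, |∑_{i=1}^k |C_i|·cost(μ_i,S) + Δ − cost(P,S)| ≤ ε·cost(P,S). -/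
/-!
With `s j` the center of `S` nearest to the centroid `μ j`, the parallel-axis identity
`∑_{p ∈ C} ‖p - z‖² = ∑_{p ∈ C} ‖p - μ‖² + |C| ‖μ - z‖²` turns `∑ |C_j| cost(μ_j, S) + Δ` into
`∑_p ‖p - s (cl p)‖²`: the cost of serving every point by the center nearest to its own centroid.
This is at least `cost(P, S)`, and the excess is what has to be bounded.

When `2Δ + 2√Δ √cost(P,S) ≤ ε cost(P,S)`, Cauchy–Schwarz bounds the excess by the left side.
Otherwise `cost(P,S) = O(Δ/ε²)`. Merging cluster `j` into cluster `l` costs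
`|C_j| ‖μ_j - μ_l‖²`, which stability makes at least `βΔ`; together with
`|C_j| ‖μ_j - s_j‖² ≤ (√Δ + √cost(P,S))²` this gives `‖μ_j - s_j‖ ≤ τ ‖μ_j - μ_l‖` with
`τ = O(ε √(cost(P,S)/Δ)) < 1/2`. So the `s j` are distinct and exhaust `S`, and a point of `C_j`
served by `s l` is no closer to `μ_l` than to `μ_j`, so its excess is `O(τ) ‖p - μ_j‖²`. Summing,
the excess is `O(τ) Δ ≤ ε cost(P,S)`.
-/

open Finset

noncomputable section

/-- `ℝ^d` as a Euclidean space. -/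
abbrev Pt (d : ℕ) := EuclideanSpace ℝ (Fin d)

/-- `cost(p,S) = min_{s ∈ S} ‖p - s‖²`. -/
noncomputable def pcost {d : ℕ} (p : Pt d) (S : Finset (Pt d)) : ℝ :=
  sInf ((fun s => ‖p - s‖ ^ 2) '' (S : Set (Pt d)))

/-- `cost(P,S) = ∑_{p ∈ P} min_{s ∈ S} ‖p - s‖²`. -/
noncomputable def scost {d : ℕ} (P S : Finset (Pt d)) : ℝ :=
  ∑ p ∈ P, pcost p S

/-- `OPT_j`: the optimal k-means cost of `P` with `j` centers. -/
noncomputable def kmOPT {d : ℕ} (P : Finset (Pt d)) (j : ℕ) : ℝ :=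
  sInf ((fun S : Finset (Pt d) => scost P S) '' {S : Finset (Pt d) | S.card = j})

theorem sum_add_sq_le_sqrt_add_sqrt_sq {ι : Type*} (s : Finset ι) (f g : ι → ℝ) :
    ∑ i ∈ s, (f i + g i) ^ 2 ≤ (√(∑ i ∈ s, f i ^ 2) + √(∑ i ∈ s, g i ^ 2)) ^ 2 := by
  have hf := Real.sq_sqrt (sum_nonneg (s := s) fun i _ => sq_nonneg (f i))
  have hg := Real.sq_sqrt (sum_nonneg (s := s) fun i _ => sq_nonneg (g i))
  have hfg := Real.sum_mul_le_sqrt_mul_sqrt s f g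
  have hexp : ∑ i ∈ s, (f i + g i) ^ 2
      = ∑ i ∈ s, f i ^ 2 + 2 * ∑ i ∈ s, f i * g i + ∑ i ∈ s, g i ^ 2 := by
    simp only [add_sq, sum_add_distrib, mul_sum, mul_assoc]
  nlinarith

section Mean

variable {E : Type*} [NormedAddCommGroup E] [InnerProductSpace ℝ E]

def mean (C : Finset E) : E := (#C : ℝ)⁻¹ • ∑ p ∈ C, p

theorem sum_norm_sub_sq_eq_add_mean (C : Finset E) (z : E) :
    ∑ p ∈ C, ‖p - z‖ ^ 2
      = ∑ p ∈ C, ‖p - mean C‖ ^ 2 + #C * ‖mean C - z‖ ^ 2 := by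
  rcases C.eq_empty_or_nonempty with rfl | hC
  · simp
  set μ := mean C
  have hsum : ∑ p ∈ C, (p - μ) = 0 := by
    rw [sum_sub_distrib, sum_const, sub_eq_zero, ← Nat.cast_smul_eq_nsmul ℝ]
    exact (smul_inv_smul₀ (Nat.cast_ne_zero.2 hC.card_pos.ne') _).symm
  calc ∑ p ∈ C, ‖p - z‖ ^ 2
      = ∑ p ∈ C, (‖p - μ‖ ^ 2 + 2 * inner ℝ (p - μ) (μ - z) + ‖μ - z‖ ^ 2) := by
        refine sum_congr rfl fun p _ => ?_
        rw [← norm_add_sq_real, sub_add_sub_cancel]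
    _ = ∑ p ∈ C, ‖p - μ‖ ^ 2 + 2 * inner ℝ (∑ p ∈ C, (p - μ)) (μ - z)
          + #C * ‖μ - z‖ ^ 2 := by
        rw [sum_add_distrib, sum_add_distrib, ← mul_sum, ← sum_inner, sum_const, nsmul_eq_mul]
    _ = _ := by rw [hsum, inner_zero_left, mul_zero, add_zero]

end Mean

theorem sq_norm_sub_sub_sq_norm_sub_le {E : Type*} [SeminormedAddCommGroup E]
    {p μj μl sj sl : E} {τ : ℝ} (hτ0 : 0 ≤ τ) (hτ1 : 2 * τ ≤ 1)
    (hμ : ‖p - μj‖ ≤ ‖p - μl‖) (hs : ‖p - sl‖ ≤ ‖p - sj‖)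
    (hj : ‖μj - sj‖ ≤ τ * ‖μj - μl‖) (hl : ‖μl - sl‖ ≤ τ * ‖μj - μl‖) :
    (1 - 2 * τ) ^ 2 * (‖p - sj‖ ^ 2 - ‖p - sl‖ ^ 2) ≤ (8 * τ - 12 * τ ^ 2) * ‖p - μj‖ ^ 2 := by
  set u := ‖p - μj‖
  set D := ‖μj - μl‖
  have hw : ‖p - sj‖ ≤ u + ‖μj - sj‖ := norm_sub_le_norm_sub_add_norm_sub p μj sj
  have hc : ‖p - μl‖ ≤ ‖p - sl‖ + ‖μl - sl‖ := by
    rw [norm_sub_rev μl]; exact norm_sub_le_norm_sub_add_norm_sub p sl μl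
  have hD : D ≤ u + ‖p - μl‖ :=
    (norm_sub_le_norm_sub_add_norm_sub μj p μl).trans_eq (by rw [norm_sub_rev μj p])
  have hu := norm_nonneg (p - μj)
  have hc0 := norm_nonneg (p - sl)
  have hrj := norm_nonneg (μj - sj)
  have hdef : ‖p - sj‖ ^ 2 - ‖p - sl‖ ^ 2 ≤ 4 * τ * D * u + τ ^ 2 * D ^ 2 := by
    have hsj : ‖p - sj‖ ^ 2 ≤ (u + ‖μj - sj‖) ^ 2 := pow_le_pow_left₀ (norm_nonneg _) hw 2
    have hsl : u ^ 2 - 2 * u * ‖μl - sl‖ ≤ ‖p - sl‖ ^ 2 := by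
      rcases le_total u ‖μl - sl‖ with h | h
      · nlinarith [mul_nonneg hu (sub_nonneg.2 h)]
      · nlinarith [pow_le_pow_left₀ (sub_nonneg.2 h) (by linarith : u - ‖μl - sl‖ ≤ ‖p - sl‖) 2,
          sq_nonneg ‖μl - sl‖]
    nlinarith [mul_le_mul_of_nonneg_left hj hu, mul_le_mul_of_nonneg_left hl hu,
      mul_self_le_mul_self hrj hj]
  have hDu : (1 - 2 * τ) * D ≤ 2 * u := by nlinarith
  have hD0 : 0 ≤ D := norm_nonneg _
  have h12 : 0 ≤ 1 - 2 * τ := by linarith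
  nlinarith [mul_le_mul_of_nonneg_left hdef (sq_nonneg (1 - 2 * τ)),
    mul_le_mul_of_nonneg_left hDu (mul_nonneg (mul_nonneg hτ0 hu) h12),
    mul_self_le_mul_self (mul_nonneg h12 hD0) hDu]

theorem injective_of_norm_sub_le {ι E : Type*} [NormedAddCommGroup E] {μ s : ι → E} {τ : ℝ}
    (hτ : 2 * τ < 1) (hμ : Function.Injective μ)
    (hsep : ∀ j l, j ≠ l → ‖μ j - s j‖ ≤ τ * ‖μ j - μ l‖) : Function.Injective s := by
  intro j l hjl
  by_contra hne
  have hj := hsep j l hne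
  have hl := hsep l j (Ne.symm hne)
  rw [← hjl, norm_sub_rev (μ l) (μ j)] at hl
  have hD : ‖μ j - μ l‖ ≤ ‖μ j - s j‖ + ‖μ l - s j‖ :=
    (norm_sub_le_norm_sub_add_norm_sub _ (s j) _).trans_eq (by rw [norm_sub_rev (s j)])
  have : ‖μ j - μ l‖ ≤ 0 := by nlinarith [norm_nonneg (μ j - μ l)]
  exact hne (hμ (sub_eq_zero.1 (norm_le_zero_iff.1 this)))

theorem le_mul_of_mul_sq_le {x y n L τ B : ℝ} (hB : 0 < B) (hτ : 0 ≤ τ) (hy : 0 ≤ y)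
    (hn : B ≤ n * y ^ 2) (hx : n * x ^ 2 ≤ L ^ 2) (hL : L ^ 2 ≤ τ ^ 2 * B) : x ≤ τ * y := by
  have h : x ^ 2 * B ≤ (τ * y) ^ 2 * B := by
    nlinarith [mul_le_mul_of_nonneg_left hn (sq_nonneg x),
      mul_le_mul_of_nonneg_left hx (sq_nonneg y), mul_le_mul_of_nonneg_left hL (sq_nonneg y)]
  exact abs_le_of_sq_le_sq' (le_of_mul_le_mul_right h hB) (mul_nonneg hτ hy) |>.2

/-- The last claim of `exists_separation_ratio` in terms of `a = √Δ`, `b = √R`, `y = 22 τ a`,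
with denominators cleared. -/
theorem separation_ratio_poly {a b y : ℝ} (ha : 0 < a) (hab : a ≤ b) (hy : 0 < y) (hy1 : y ≤ a + b)
    (hy2 : y * b ^ 2 ≤ 2 * a * (a + b) ^ 2) :
    44 * a ^ 3 * (a + b) - 3 * a ^ 2 * (a + b) * y ≤ b ^ 2 * (11 * a - y) ^ 2 := by
  rcases le_total b (3 * a) with hb | hb
  · -- `b²(11a - y)² + 3a²(a + b)y` decreases in `y` here, so `y = a + b` is the worst case
    have hmono : 0 ≤ (a + b - y) * (b ^ 2 * (22 * a - y - (a + b)) - 3 * a ^ 2 * (a + b)) := by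
      apply mul_nonneg (by linarith)
      nlinarith [mul_le_mul_of_nonneg_left hab ha.le, mul_le_mul hab hab ha.le (by linarith)]
    have hend : 0 ≤ b ^ 2 * (10 * a - b) ^ 2 + 3 * a ^ 2 * (a + b) ^ 2 - 44 * a ^ 3 * (a + b) := by
      nlinarith [mul_nonneg (sub_nonneg.2 hab) ha.le,
        mul_nonneg (mul_nonneg (sub_nonneg.2 hab) ha.le) ha.le,
        mul_nonneg (mul_nonneg (sub_nonneg.2 hab) (sub_nonneg.2 hab)) ha.le, mul_pos ha ha,
        mul_nonneg (mul_nonneg (sub_nonneg.2 hab) (sub_nonneg.2 hb)) ha.le]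
    nlinarith
  · have hab2 : a * (a + b) ≤ b ^ 2 / 2 := by nlinarith
    have hy4 : y ≤ 4 * a := by
      have h2 : (a + b) ^ 2 ≤ 2 * b ^ 2 := by nlinarith
      have : y * b ^ 2 ≤ 4 * a * b ^ 2 := by nlinarith [mul_le_mul_of_nonneg_left h2 ha.le]
      exact le_of_mul_le_mul_right this (by nlinarith)
    have h11 : 49 * a ^ 2 ≤ (11 * a - y) ^ 2 := by nlinarith
    nlinarith [mul_le_mul_of_nonneg_left h11 (sq_nonneg b),
      mul_le_mul_of_nonneg_left hab2 (sq_nonneg a),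
      mul_nonneg (mul_nonneg (sq_nonneg a) (by linarith : (0 : ℝ) ≤ a + b)) hy.le]

theorem exists_separation_ratio {Δ R ε β : ℝ} (hΔ : 0 < Δ) (hΔR : Δ ≤ R) (hε0 : 0 < ε)
    (hε1 : ε ≤ 1) (hβ : 22 ^ 2 ≤ ε ^ 2 * β) (hlarge : ε * R < 2 * Δ + 2 * (√Δ * √R)) :
    ∃ τ, 0 ≤ τ ∧ 2 * τ < 1 ∧ (√Δ + √R) ^ 2 ≤ τ ^ 2 * (β * Δ)
      ∧ (8 * τ - 12 * τ ^ 2) * Δ ≤ ε * R * (1 - 2 * τ) ^ 2 := by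
  set a := √Δ
  set b := √R
  have ha : 0 < a := Real.sqrt_pos.2 hΔ
  have hab : a ≤ b := Real.sqrt_le_sqrt hΔR
  rw [← Real.sq_sqrt hΔ.le, ← Real.sq_sqrt (hΔ.le.trans hΔR)] at hlarge ⊢
  have hab0 : 0 < a + b := by linarith
  obtain ⟨τ, hτ⟩ : ∃ τ, 22 * τ * a = ε * (a + b) := ⟨ε * (a + b) / (22 * a), by field_simp⟩
  have hτ0 : 0 ≤ τ := by nlinarith [mul_pos hε0 hab0]
  refine ⟨τ, hτ0, ?_, ?_, ?_⟩
  · have hεb : ε * b < 4 * a := by nlinarith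
    nlinarith
  · have hsq : β * (22 * τ * a) ^ 2 = ε ^ 2 * β * (a + b) ^ 2 := by rw [hτ]; ring
    nlinarith [mul_le_mul_of_nonneg_right hβ (sq_nonneg (a + b))]
  · have core := separation_ratio_poly ha hab (mul_pos hε0 hab0) (by nlinarith)
      (by nlinarith [mul_le_mul_of_nonneg_right hlarge.le hab0.le])
    rw [← hτ] at core
    have key := mul_le_mul_of_nonneg_left core hτ0
    refine le_of_mul_le_mul_right ?_ (mul_pos ha hab0)
    linear_combination (2 / 11) * key + a * b ^ 2 * (1 - 2 * τ) ^ 2 * hτ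

section Cost

variable {d : ℕ}

theorem pcost_nonneg (p : Pt d) (S : Finset (Pt d)) : 0 ≤ pcost p S :=
  Real.sInf_nonneg <| by rintro x ⟨s, -, rfl⟩; positivity

theorem pcost_le_of_mem (p : Pt d) {S : Finset (Pt d)} {s : Pt d} (hs : s ∈ S) :
    pcost p S ≤ ‖p - s‖ ^ 2 :=
  csInf_le ⟨0, by rintro x ⟨t, -, rfl⟩; positivity⟩ ⟨s, hs, rfl⟩

theorem exists_mem_pcost_eq (p : Pt d) {S : Finset (Pt d)} (hS : S.Nonempty) :
    ∃ s ∈ S, pcost p S = ‖p - s‖ ^ 2 := by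
  obtain ⟨s, hs, h⟩ :=
    ((coe_nonempty.2 hS).image fun s => ‖p - s‖ ^ 2).csInf_mem (S.finite_toSet.image _)
  exact ⟨s, hs, h.symm⟩

theorem scost_nonneg (P S : Finset (Pt d)) : 0 ≤ scost P S :=
  sum_nonneg fun p _ => pcost_nonneg p S

theorem kmOPT_le_scost (P : Finset (Pt d)) {S : Finset (Pt d)} {n : ℕ} (hS : #S = n) :
    kmOPT P n ≤ scost P S :=
  csInf_le ⟨0, by rintro x ⟨T, -, rfl⟩; exact scost_nonneg P T⟩ ⟨S, hS, rfl⟩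

theorem kmOPT_le_sum_norm_sub_sq (P : Finset (Pt d)) {T S : Finset (Pt d)} {n : ℕ}
    {f : Pt d → Pt d} (hT : #T ≤ n) (hS : n ≤ #S) (hf : ∀ p ∈ P, f p ∈ T) :
    kmOPT P n ≤ ∑ p ∈ P, ‖p - f p‖ ^ 2 := by
  classical
  obtain ⟨U, hTU, -, hU⟩ := exists_subsuperset_card_eq subset_union_left hT
    (hS.trans (card_le_card (subset_union_right (s₁ := T))))
  exact (kmOPT_le_scost P hU).trans (sum_le_sum fun p hp => pcost_le_of_mem p (hTU (hf p hp)))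

theorem card_mul_pcost_le (C : Finset (Pt d)) (c : Pt d) {S : Finset (Pt d)} (hS : S.Nonempty) :
    #C * pcost c S ≤ (√(∑ p ∈ C, ‖p - c‖ ^ 2) + √(∑ p ∈ C, pcost p S)) ^ 2 := by
  choose σ hσS hσ using fun p : Pt d => exists_mem_pcost_eq p hS
  calc (#C : ℝ) * pcost c S = ∑ p ∈ C, pcost c S := by rw [sum_const, nsmul_eq_mul]
    _ ≤ ∑ p ∈ C, (‖p - c‖ + ‖p - σ p‖) ^ 2 := sum_le_sum fun p _ =>
        (pcost_le_of_mem c (hσS p)).trans <| pow_le_pow_left₀ (norm_nonneg _)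
          ((norm_sub_le_norm_sub_add_norm_sub c p (σ p)).trans_eq (by rw [norm_sub_rev c p])) 2
    _ ≤ (√(∑ p ∈ C, ‖p - c‖ ^ 2) + √(∑ p ∈ C, ‖p - σ p‖ ^ 2)) ^ 2 :=
        sum_add_sq_le_sqrt_add_sqrt_sq C _ _
    _ = _ := by simp only [hσ]

theorem sum_sq_norm_sub_sub_pcost_le {ι : Type*} [Fintype ι] (P : Finset (Pt d)) (cl : Pt d → ι)
    {μ s : ι → Pt d} {S : Finset (Pt d)} {τ : ℝ} (hτ0 : 0 ≤ τ) (hτ1 : 2 * τ < 1)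
    (hμ : Function.Injective μ) (hS : #S ≤ Fintype.card ι) (hsS : ∀ j, s j ∈ S)
    (hsep : ∀ j l, j ≠ l → ‖μ j - s j‖ ≤ τ * ‖μ j - μ l‖)
    (hnear : ∀ p ∈ P, ∀ l, ‖p - μ (cl p)‖ ≤ ‖p - μ l‖) :
    (1 - 2 * τ) ^ 2 * ∑ p ∈ P, (‖p - s (cl p)‖ ^ 2 - pcost p S)
      ≤ (8 * τ - 12 * τ ^ 2) * ∑ p ∈ P, ‖p - μ (cl p)‖ ^ 2 := by
  have hs := injective_of_norm_sub_le hτ1 hμ hsep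
  have hsurj : ∀ q ∈ S, ∃ l, q = s l := fun q hq => by
    obtain ⟨l, -, hl⟩ := surj_on_of_inj_on_of_card_le (s := univ) (fun j _ => s j)
      (fun j _ => hsS j) (fun _ _ _ _ h => hs h) (by simpa using hS) q hq
    exact ⟨l, hl⟩
  rw [mul_sum, mul_sum]
  refine sum_le_sum fun p hp => ?_
  obtain ⟨q, hq, hpq⟩ := exists_mem_pcost_eq p ⟨_, hsS (cl p)⟩
  obtain ⟨l, rfl⟩ := hsurj q hq
  rw [hpq]
  rcases eq_or_ne (cl p) l with rfl | hne
  · rw [sub_self, mul_zero]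
    exact mul_nonneg (by nlinarith) (sq_nonneg _)
  · refine sq_norm_sub_sub_sq_norm_sub_le hτ0 hτ1.le (hnear p hp l) ?_ (hsep _ _ hne)
      ((hsep _ _ hne.symm).trans_eq (by rw [norm_sub_rev (μ l)]))
    exact (sq_le_sq₀ (norm_nonneg _) (norm_nonneg _)).1 (hpq ▸ pcost_le_of_mem p (hsS (cl p)))

end Cost

section Clustering

variable {d : ℕ} {ι : Type*} [DecidableEq ι] (P : Finset (Pt d)) (cl : Pt d → ι)

def cluster (j : ι) : Finset (Pt d) := P.filter fun p => cl p = j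

variable [Fintype ι]

def clusteringCost : ℝ := ∑ j, ∑ p ∈ cluster P cl j, ‖p - mean (cluster P cl j)‖ ^ 2

def centroidCost (S : Finset (Pt d)) : ℝ :=
  ∑ j, #(cluster P cl j) * pcost (mean (cluster P cl j)) S

theorem clusteringCost_eq_sum :
    clusteringCost P cl = ∑ p ∈ P, ‖p - mean (cluster P cl (cl p))‖ ^ 2 := by
  rw [← sum_fiberwise P cl]
  exact sum_congr rfl fun j _ => sum_congr rfl fun p hp => by rw [(mem_filter.1 hp).2]

theorem centroidCost_add_clusteringCost_eq {S : Finset (Pt d)} {s : ι → Pt d}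
    (hs : ∀ j, pcost (mean (cluster P cl j)) S = ‖mean (cluster P cl j) - s j‖ ^ 2) :
    centroidCost P cl S + clusteringCost P cl = ∑ p ∈ P, ‖p - s (cl p)‖ ^ 2 := by
  rw [← sum_fiberwise P cl, centroidCost, clusteringCost, ← sum_add_distrib]
  refine sum_congr rfl fun j _ => ?_
  rw [hs, add_comm, ← sum_norm_sub_sq_eq_add_mean]
  exact sum_congr rfl fun p hp => by rw [(mem_filter.1 hp).2]

theorem scost_le_centroidCost_add_clusteringCost {S : Finset (Pt d)} (hS : S.Nonempty) :
    scost P S ≤ centroidCost P cl S + clusteringCost P cl := by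
  choose s hsS hs using fun j => exists_mem_pcost_eq (mean (cluster P cl j)) hS
  rw [centroidCost_add_clusteringCost_eq P cl hs]
  exact sum_le_sum fun p _ => pcost_le_of_mem p (hsS (cl p))

theorem centroidCost_add_clusteringCost_le {S : Finset (Pt d)} (hS : S.Nonempty) :
    centroidCost P cl S + clusteringCost P cl
      ≤ scost P S + 2 * clusteringCost P cl + 2 * (√(clusteringCost P cl) * √(scost P S)) := by
  set Δ : ι → ℝ := fun j => ∑ p ∈ cluster P cl j, ‖p - mean (cluster P cl j)‖ ^ 2
  set R : ι → ℝ := fun j => ∑ p ∈ cluster P cl j, pcost p S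
  have hΔ : ∀ j, 0 ≤ Δ j := fun j => sum_nonneg fun p _ => sq_nonneg _
  have hR : ∀ j, 0 ≤ R j := fun j => sum_nonneg fun p _ => pcost_nonneg p S
  have hcl : ∀ j, #(cluster P cl j) * pcost (mean (cluster P cl j)) S
      ≤ Δ j + R j + 2 * (√(Δ j) * √(R j)) := fun j => by
    have h := card_mul_pcost_le (cluster P cl j) (mean (cluster P cl j)) hS
    rw [add_sq, Real.sq_sqrt (hΔ j), Real.sq_sqrt (hR j)] at h
    linarith
  have hscost : scost P S = ∑ j, R j := (sum_fiberwise P cl _).symm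
  have hcs := Real.sum_sqrt_mul_sqrt_le univ hΔ hR
  calc centroidCost P cl S + clusteringCost P cl
      ≤ ∑ j, (Δ j + R j + 2 * (√(Δ j) * √(R j))) + clusteringCost P cl :=
        add_le_add (sum_le_sum fun j _ => hcl j) le_rfl
    _ = ∑ j, R j + 2 * ∑ j, Δ j + 2 * ∑ j, √(Δ j) * √(R j) := by
        rw [sum_add_distrib, sum_add_distrib, ← mul_sum, clusteringCost]; ring
    _ ≤ _ := by rw [hscost, clusteringCost]; linarith

theorem norm_sub_mean_le_of_optimal {S : Finset (Pt d)}
    (hopt : clusteringCost P cl = kmOPT P (Fintype.card ι)) (hS : Fintype.card ι ≤ #S)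
    {p : Pt d} (hp : p ∈ P) (l : ι) :
    ‖p - mean (cluster P cl (cl p))‖ ≤ ‖p - mean (cluster P cl l)‖ := by
  classical
  set μ := fun j => mean (cluster P cl j)
  set f := fun q => if q = p then μ l else μ (cl q)
  have hcost := kmOPT_le_sum_norm_sub_sq P (T := univ.image μ) (f := f)
    (card_image_le.trans_eq (card_univ)) hS
    (fun q _ => by simp only [f]; split_ifs <;> exact mem_image_of_mem μ (mem_univ _))
  have hrest : ∑ q ∈ P.erase p, ‖q - f q‖ ^ 2 = ∑ q ∈ P.erase p, ‖q - μ (cl q)‖ ^ 2 :=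
    sum_congr rfl fun q hq => by simp only [f, if_neg (ne_of_mem_erase hq)]
  rw [← hopt, clusteringCost_eq_sum, ← add_sum_erase P _ hp, ← add_sum_erase P _ hp, hrest]
    at hcost
  simp only [f, if_pos] at hcost
  exact (sq_le_sq₀ (norm_nonneg _) (norm_nonneg _)).1 (by linarith)

theorem kmOPT_card_sub_one_le {S : Finset (Pt d)} (hS : Fintype.card ι - 1 ≤ #S) {j l : ι}
    (hjl : j ≠ l) :
    kmOPT P (Fintype.card ι - 1) ≤ clusteringCost P cl
      + #(cluster P cl j) * ‖mean (cluster P cl j) - mean (cluster P cl l)‖ ^ 2 := by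
  set μ := fun i => mean (cluster P cl i)
  set f := fun q => if cl q = j then μ l else μ (cl q)
  have hcost := kmOPT_le_sum_norm_sub_sq P (T := (univ.erase j).image μ) (f := f)
    (card_image_le.trans_eq (by rw [card_erase_of_mem (mem_univ j), card_univ])) hS
    (fun q _ => by
      simp only [f]
      split_ifs with h
      · exact mem_image_of_mem μ (mem_erase.2 ⟨hjl.symm, mem_univ l⟩)
      · exact mem_image_of_mem μ (mem_erase.2 ⟨h, mem_univ _⟩))
  have hcluster : ∀ i, ∑ q ∈ cluster P cl i, ‖q - f q‖ ^ 2
      = ∑ q ∈ cluster P cl i, ‖q - μ i‖ ^ 2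
        + if i = j then #(cluster P cl j) * ‖μ j - μ l‖ ^ 2 else 0 := fun i => by
    by_cases h : i = j
    · subst h
      rw [if_pos rfl, ← sum_norm_sub_sq_eq_add_mean]
      exact sum_congr rfl fun q hq => by simp only [f, (mem_filter.1 hq).2, if_pos]
    · rw [if_neg h, add_zero]
      exact sum_congr rfl fun q hq => by simp only [f, (mem_filter.1 hq).2, if_neg h]
  refine hcost.trans_eq <| (sum_fiberwise P cl _).symm.trans <|
    (sum_congr rfl fun i _ => hcluster i).trans ?_
  rw [sum_add_distrib, sum_ite_eq', if_pos (mem_univ j)]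
  rfl

theorem card_mul_pcost_mean_le {S : Finset (Pt d)} (hS : S.Nonempty) (j : ι) :
    #(cluster P cl j) * pcost (mean (cluster P cl j)) S
      ≤ (√(clusteringCost P cl) + √(scost P S)) ^ 2 := by
  refine (card_mul_pcost_le _ _ hS).trans (pow_le_pow_left₀ (by positivity)
    (add_le_add (Real.sqrt_le_sqrt ?_) (Real.sqrt_le_sqrt ?_)) 2)
  · exact single_le_sum (f := fun i => ∑ p ∈ cluster P cl i, ‖p - mean (cluster P cl i)‖ ^ 2)
      (fun i _ => sum_nonneg fun p _ => sq_nonneg _) (mem_univ j)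
  · rw [scost, ← sum_fiberwise P cl]
    exact single_le_sum (f := fun i => ∑ p ∈ cluster P cl i, pcost p S)
      (fun i _ => sum_nonneg fun p _ => pcost_nonneg p S) (mem_univ j)

theorem mul_clusteringCost_le_of_stable {β : ℝ} {S : Finset (Pt d)}
    (hS : Fintype.card ι - 1 ≤ #S) (hopt : clusteringCost P cl = kmOPT P (Fintype.card ι))
    (hstable : kmOPT P (Fintype.card ι) * (1 + β) ≤ kmOPT P (Fintype.card ι - 1))
    {j l : ι} (hjl : j ≠ l) :
    β * clusteringCost P cl
      ≤ #(cluster P cl j) * ‖mean (cluster P cl j) - mean (cluster P cl l)‖ ^ 2 := by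
  have := kmOPT_card_sub_one_le P cl hS hjl
  rw [← hopt] at hstable
  linarith

theorem centroidCost_add_clusteringCost_le_of_stable {ε β : ℝ} {S : Finset (Pt d)}
    (hε0 : 0 < ε) (hε1 : ε ≤ 1) (hβ : 22 ^ 2 ≤ ε ^ 2 * β) (hS : #S = Fintype.card ι)
    (hopt : clusteringCost P cl = kmOPT P (Fintype.card ι))
    (hstable : kmOPT P (Fintype.card ι) * (1 + β) ≤ kmOPT P (Fintype.card ι - 1))
    (hlarge : ε * scost P S
      < 2 * clusteringCost P cl + 2 * (√(clusteringCost P cl) * √(scost P S))) :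
    centroidCost P cl S + clusteringCost P cl ≤ scost P S + ε * scost P S := by
  set μ := fun j => mean (cluster P cl j)
  set Δ := clusteringCost P cl
  set R := scost P S
  have hΔR : Δ ≤ R := hopt ▸ kmOPT_le_scost P hS
  have hΔ : 0 < Δ := by
    by_contra! h
    rw [Real.sqrt_eq_zero'.2 h, zero_mul, mul_zero, add_zero] at hlarge
    nlinarith [scost_nonneg P S]
  have hβΔ : 0 < β * Δ := mul_pos (by nlinarith [sq_nonneg ε]) hΔ
  have hmerge : ∀ j l, j ≠ l → β * Δ ≤ #(cluster P cl j) * ‖μ j - μ l‖ ^ 2 := fun j l hjl =>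
    mul_clusteringCost_le_of_stable P cl ((Nat.sub_le _ _).trans hS.ge) hopt hstable hjl
  have hμ : Function.Injective μ := fun j l h => by
    by_contra hjl
    have := hmerge j l hjl
    rw [h, sub_self, norm_zero] at this
    nlinarith
  have hSne : S.Nonempty := by rw [← card_pos, hS]; exact Fintype.card_pos_iff.2 ⟨cl 0⟩
  choose s hsS hs using fun j => exists_mem_pcost_eq (μ j) hSne
  obtain ⟨τ, hτ0, hτ1, hL, harith⟩ := exists_separation_ratio hΔ hΔR hε0 hε1 hβ hlarge
  have hsep : ∀ j l, j ≠ l → ‖μ j - s j‖ ≤ τ * ‖μ j - μ l‖ := fun j l hjl =>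
    le_mul_of_mul_sq_le hβΔ hτ0 (norm_nonneg _) (hmerge j l hjl)
      (by rw [← hs j]; exact card_mul_pcost_mean_le P cl hSne j) hL
  have hdef := sum_sq_norm_sub_sub_pcost_le P cl hτ0 hτ1 hμ hS.le hsS hsep
    (fun p hp l => norm_sub_mean_le_of_optimal P cl hopt hS.ge hp l)
  have hX : ∑ p ∈ P, ‖p - s (cl p)‖ ^ 2 = centroidCost P cl S + Δ :=
    (centroidCost_add_clusteringCost_eq P cl hs).symm
  have hΔsum : ∑ p ∈ P, ‖p - μ (cl p)‖ ^ 2 = Δ := (clusteringCost_eq_sum P cl).symm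
  have hRsum : ∑ p ∈ P, pcost p S = R := rfl
  rw [sum_sub_distrib, hX, hΔsum, hRsum] at hdef
  have h12 : 0 < (1 - 2 * τ) ^ 2 := by nlinarith
  have := le_of_mul_le_mul_left (hdef.trans (by linarith : _ ≤ (1 - 2 * τ) ^ 2 * (ε * R))) h12
  linarith

end Clustering

theorem offset_coreset_for_very_stable_general
    {d : ℕ} (k : ℕ) (ε β : ℝ) (P : Finset (Pt d)) (cl : Pt d → Fin k)
    (hε0 : 0 < ε) (hε1 : ε < 1)
    (hβ : 512 * ε ^ (-2 : ℤ) < β)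
    (hstable : kmOPT P k * (1 + β) ≤ kmOPT P (k - 1)) :
    -- the clusters of the partition and their centroids
    let Cj : Fin k → Finset (Pt d) := fun j => P.filter fun p => cl p = j
    let μc : Fin k → Pt d := fun j => (((Cj j).card : ℝ))⁻¹ • ∑ p ∈ Cj j, p
    let Δ : ℝ := ∑ j : Fin k, ∑ p ∈ Cj j, ‖p - μc j‖ ^ 2
    -- the clustering is an optimal k-means clustering of `P`
    Δ = kmOPT P k →
    -- coreset-with-offset guarantee
    ∀ S : Finset (Pt d), S.card = k →
      |(∑ j : Fin k, ((Cj j).card : ℝ) * pcost (μc j) S) + Δ - scost P S|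
        ≤ ε * scost P S := by
  intro Cj μc Δ hΔ S hS
  change |centroidCost P cl S + clusteringCost P cl - scost P S| ≤ ε * scost P S
  have hSne : S.Nonempty := card_pos.1 (hS ▸ Fin.pos (cl 0))
  have hβ' : 22 ^ 2 ≤ ε ^ 2 * β := by
    rw [zpow_neg, zpow_ofNat, ← div_eq_mul_inv, div_lt_iff₀ (by positivity)] at hβ
    linarith
  rw [abs_of_nonneg (sub_nonneg.2 (scost_le_centroidCost_add_clusteringCost P cl hSne))]
  by_cases hsmall : 2 * clusteringCost P cl + 2 * (√(clusteringCost P cl) * √(scost P S))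
      ≤ ε * scost P S
  · linarith [centroidCost_add_clusteringCost_le P cl hSne]
  · rw [← Fintype.card_fin k] at hS hΔ hstable
    linarith [centroidCost_add_clusteringCost_le_of_stable P cl hε0 hε1.le hβ' hS hΔ hstable
      (not_le.1 hsmall)]

/-- For instances with stability `β > 512·ε^{-2}`, the optimal centroids (weighted by
cluster sizes) together with the offset `Δ = OPT_k` form an ε-coreset with offset of
size `k`. -/
theorem offset_coreset_for_very_stable
    {d : ℕ} (k : ℕ) (ε β : ℝ) (P : Finset (Pt d)) (cl : Pt d → Fin k)
    (hε0 : 0 < ε) (hε1 : ε < 1) (hk : 1 ≤ k)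
    (hβ : 512 * ε ^ (-2 : ℤ) < β)
    (hstable : kmOPT P k * (1 + β) ≤ kmOPT P (k - 1)) :
    -- the clusters of the partition and their centroids
    let Cj : Fin k → Finset (Pt d) := fun j => P.filter fun p => cl p = j
    let μc : Fin k → Pt d := fun j => (((Cj j).card : ℝ))⁻¹ • ∑ p ∈ Cj j, p
    let Δ : ℝ := ∑ j : Fin k, ∑ p ∈ Cj j, ‖p - μc j‖ ^ 2
    -- the clustering is an optimal k-means clustering of `P`
    Δ = kmOPT P k →
    -- coreset-with-offset guarantee
    ∀ S : Finset (Pt d), S.card = k →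
      |(∑ j : Fin k, ((Cj j).card : ℝ) * pcost (μc j) S) + Δ - scost P S|
        ≤ ε * scost P S :=
  offset_coreset_for_very_stable_general k ε β P cl hε0 hε1 hβ hstable
end
end

section
/- There is an absolute constant C > 0 such that the following holds. Let Ω ⊂ ℝ^d be a finite non-empty set, let x ∈ ℝ^d, let α ∈ (0,1), and let U_0 ⊂ ℝ^d be any finite set. Then there exists a subset R(x) ⊆ Ω with |R(x)| ≤ C/α², containing a point of Ω nearest to x, such that if Π denotes the orthogonal projection of ℝ^d onto the linear span of U_0 ∪ R(x), then for every q ∈ Ω: |⟨q, x⟩ − ⟨Πq, x⟩| ≤ α · ‖q − Πq‖ · min_{q'∈Ω} ‖q' − x‖. -/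
/-!
Greedy augmentation. Let `r` be the distance from `x` to `Ω`, attained at `q₀`, and start from
`R = {q₀}`: then the residual `x - Πx` has squared norm at most `r ^ 2`. Since `q - Πq` is
orthogonal to `Πx`, `⟪q - Πq, x⟫ = ⟪q - Πq, x - Πx⟫`; so a point `q ∈ Ω` violating the bound
has a residual direction carrying more than `(α r) ^ 2` of `‖x - Πx‖ ^ 2`, and adding `q` to `R`
lowers `‖x - Πx‖ ^ 2` by at least that much. Hence at most `⌈1 / α ^ 2⌉` points get added.
-/

open Finset
open scoped RealInnerProductSpace

noncomputable section

namespace Submodule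

variable {E : Type*} [NormedAddCommGroup E] [InnerProductSpace ℝ E]

theorem norm_sub_starProjection_le (K : Submodule ℝ E) [K.HasOrthogonalProjection] (x : E)
    {v : E} (hv : v ∈ K) : ‖x - K.starProjection x‖ ≤ ‖x - v‖ := by
  rw [starProjection_minimal]
  exact ciInf_le ⟨0, by rintro _ ⟨w, rfl⟩; positivity⟩ (⟨v, hv⟩ : K)

theorem sq_norm_sub_starProjection_le_of_le {K K' : Submodule ℝ E} [K.HasOrthogonalProjection]
    [K'.HasOrthogonalProjection] (hKK' : K ≤ K') {q : E} (hq : q ∈ K') (x : E) :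
    ‖x - K'.starProjection x‖ ^ 2 ≤ ‖x - K.starProjection x‖ ^ 2 -
      ⟪q - K.starProjection q, x⟫ ^ 2 / ‖q - K.starProjection q‖ ^ 2 := by
  set u := q - K.starProjection q
  set w := x - K.starProjection x
  set c := ⟪u, x⟫ / ‖u‖ ^ 2
  have hu : u ∈ K' := K'.sub_mem hq (hKK' (K.starProjection_apply_mem q))
  have hwu : ⟪w, u⟫ = ⟪u, x⟫ := by
    rw [real_inner_comm, inner_sub_right, starProjection_inner_eq_zero q _
      (K.starProjection_apply_mem x), sub_zero]
  have hv : K.starProjection x + c • u ∈ K' :=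
    K'.add_mem (hKK' (K.starProjection_apply_mem x)) (K'.smul_mem c hu)
  have hxv : ‖w - c • u‖ ^ 2 = ‖w‖ ^ 2 - ⟪u, x⟫ ^ 2 / ‖u‖ ^ 2 := by
    rw [norm_sub_sq_real, real_inner_smul_right, hwu, norm_smul, Real.norm_eq_abs,
      mul_pow, sq_abs]
    rcases eq_or_ne u 0 with h | h
    · simp [c, h]
    · have : ‖u‖ ≠ 0 := norm_ne_zero_iff.mpr h
      simp only [c]
      field_simp
      ring
  rw [← hxv, sub_sub]
  exact pow_le_pow_left₀ (norm_nonneg _) (K'.norm_sub_starProjection_le x hv) 2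

end Submodule

section Augmentation

open Submodule

variable {E : Type*} [NormedAddCommGroup E] [InnerProductSpace ℝ E] [FiniteDimensional ℝ E]

theorem exists_augment_abs_inner_sub_starProjection_le (Ω : Finset E) (U₀ : Set E) (x : E)
    {ε : ℝ} (hε : 0 ≤ ε) (n : ℕ) (R : Finset E) (hRΩ : R ⊆ Ω)
    (hx : ‖x - (span ℝ (U₀ ∪ R)).starProjection x‖ ^ 2 ≤ n * ε ^ 2) :
    ∃ R' : Finset E, R ⊆ R' ∧ R' ⊆ Ω ∧ #R' ≤ #R + n ∧ ∀ q ∈ Ω,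
      |⟪q - (span ℝ (U₀ ∪ R')).starProjection q, x⟫| ≤
        ‖q - (span ℝ (U₀ ∪ R')).starProjection q‖ * ε := by
  classical
  induction n generalizing R with
  | zero =>
    refine ⟨R, subset_rfl, hRΩ, le_rfl, fun q _ => ?_⟩
    have hxK : x ∈ span ℝ (U₀ ∪ R) := by
      rw [← starProjection_eq_self_iff, eq_comm, ← sub_eq_zero, ← norm_eq_zero]
      simpa using hx
    rw [starProjection_inner_eq_zero q x hxK, abs_zero]
    positivity
  | succ n ih =>
    set K := span ℝ (U₀ ∪ R)
    by_cases hgood : ∀ q ∈ Ω, |⟪q - K.starProjection q, x⟫| ≤ ‖q - K.starProjection q‖ * ε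
    · exact ⟨R, subset_rfl, hRΩ, Nat.le_add_right _ _, hgood⟩
    push Not at hgood
    obtain ⟨q, hqΩ, hviol⟩ := hgood
    set u := q - K.starProjection q
    have hu : u ≠ 0 := by
      rintro h
      simp [h] at hviol
    have hε_sq : ε ^ 2 ≤ ⟪u, x⟫ ^ 2 / ‖u‖ ^ 2 := by
      rw [le_div_iff₀ (by positivity), ← sq_abs ⟪u, x⟫, ← mul_pow, mul_comm]
      exact (pow_lt_pow_left₀ hviol (by positivity) two_ne_zero).le
    have hdesc := sq_norm_sub_starProjection_le_of_le (K := K)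
      (K' := span ℝ (U₀ ∪ ↑(insert q R)))
      (span_mono (Set.union_subset_union_right _ (by simp)))
      (subset_span (Set.mem_union_right _ (mem_insert_self q R))) x
    obtain ⟨R', hRR', hR'Ω, hcard, hR'⟩ := ih (insert q R) (insert_subset hqΩ hRΩ) (by
      rw [Nat.cast_succ] at hx
      linarith)
    refine ⟨R', (subset_insert q R).trans hRR', hR'Ω, ?_, hR'⟩
    linarith [card_insert_le q R]

end Augmentation

theorem one_add_natCeil_le_three_mul {t : ℝ} (ht : 1 ≤ t) : 1 + (⌈t⌉₊ : ℝ) ≤ 3 * t := by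
  linarith [Nat.ceil_lt_add_one (zero_le_one.trans ht)]

/-- Dimension reduction lemma: any set `U₀` can be augmented by `O(1/α²)` points of `Ω`
(including a point of `Ω` nearest to `x`) so that projecting onto the span of the
augmented set almost preserves inner products with `x`. -/
theorem subspace_augmentation :
    ∃ C : ℝ, 0 < C ∧
      ∀ (d : ℕ) (Ω : Finset (Pt d)) (x : Pt d) (α : ℝ) (U₀ : Finset (Pt d))
        (hΩ : Ω.Nonempty), 0 < α → α < 1 →
        ∃ R : Finset (Pt d), R ⊆ Ω ∧ (R.card : ℝ) ≤ C / α ^ 2 ∧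
          (∃ q₀ ∈ R, ∀ q' ∈ Ω, ‖q₀ - x‖ ≤ ‖q' - x‖) ∧
          ∀ q ∈ Ω,
            abs (⟪q, x⟫ -
                ⟪(Submodule.orthogonalProjectionOnto
                    (Submodule.span ℝ ((U₀ : Set (Pt d)) ∪ (R : Set (Pt d)))) q : Pt d),
                  x⟫)
              ≤ α * ‖q - (Submodule.orthogonalProjectionOnto
                    (Submodule.span ℝ ((U₀ : Set (Pt d)) ∪ (R : Set (Pt d)))) q : Pt d)‖ *
                  (Ω.inf' hΩ fun q' => ‖q' - x‖) := by
  refine ⟨3, three_pos, fun d Ω x α U₀ hΩ hα hα1 => ?_⟩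
  obtain ⟨q₀, hq₀Ω, hq₀min⟩ := Ω.exists_min_image (fun q' => ‖q' - x‖) hΩ
  set r := Ω.inf' hΩ fun q' => ‖q' - x‖
  have hr : r = ‖x - q₀‖ := by
    rw [norm_sub_rev]
    exact le_antisymm (inf'_le _ hq₀Ω) (le_inf' hΩ _ hq₀min)
  have hα_inv : 1 ≤ 1 / α ^ 2 := by
    rw [one_le_div (by positivity)]
    nlinarith
  set n := ⌈1 / α ^ 2⌉₊
  have hinit : ‖x - (Submodule.span ℝ (U₀ ∪ ({q₀} : Finset (Pt d)))).starProjection x‖ ^ 2 ≤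
      n * (α * r) ^ 2 := calc
    _ ≤ r ^ 2 := by
      rw [hr]
      gcongr
      exact Submodule.norm_sub_starProjection_le _ x (Submodule.subset_span (by simp))
    _ = 1 / α ^ 2 * (α * r) ^ 2 := by field_simp
    _ ≤ n * (α * r) ^ 2 := by gcongr; exact Nat.le_ceil _
  obtain ⟨R, hq₀R, hRΩ, hcard, hR⟩ := exists_augment_abs_inner_sub_starProjection_le Ω U₀ x
    (mul_nonneg hα.le (hr ▸ norm_nonneg _)) n {q₀} (singleton_subset_iff.mpr hq₀Ω) hinit
  refine ⟨R, hRΩ, ?_, ⟨q₀, hq₀R (mem_singleton_self q₀), hq₀min⟩, fun q hq => ?_⟩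
  · calc (#R : ℝ) ≤ 1 + n := by rw [card_singleton] at hcard; exact_mod_cast hcard
      _ ≤ 3 * (1 / α ^ 2) := one_add_natCeil_le_three_mul hα_inv
      _ = 3 / α ^ 2 := by ring
  · rw [Submodule.coe_orthogonalProjectionOnto_apply, ← inner_sub_left]
    exact (hR q hq).trans_eq (by ring)
end
end

section
/- Let ε ∈ (0,1/2], let P ⊂ ℝ^d be a finite set partitioned into clusters C_1,…,C_k with centers a_1,…,a_k, and let μ be the sensitivity sampling distribution on P. If m ≥ 48·k·ε^{-2}·log(10k·ε^{-1}), then with probability at least 1 − ε³/k³ over the m i.i.d. samples q_1,…,q_m from μ (with weights w_{q_i} = 1/(m·μ(q_i))), the weighted sample Ω satisfies event E. -/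
/-!
Each condition of event `E` concerns a sum `∑ᵢ f (qᵢ)` of `m` i.i.d. nonnegative terms, where `f`
is the weight `1/(m μ)` times `1` or `cost(·, a_j)`, restricted to `C_j` or to a ring `R_j(ℓ)`.
(P1) and (P3) ask the sum to be within a factor `1 ± ε` of its mean `T = |C_j|`, resp.
`T = cost(C_j, a_j)`; (P2) asks it to be at most `2T` for `T = |C_j|/2^ℓ`, which bounds its mean
`|R_j(ℓ)|` by Markov's inequality. The sensitivity `μ(p)` dominates `1/(4k|C_j|)`,
`cost(p, a_j)/(4k cost(C_j, a_j))` and, on `R_j(ℓ)`, `2^ℓ/(4k|C_j|)`, so each term is at most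
`4kT/m`. A Chernoff bound (Markov's inequality for `exp (λ ∑ᵢ f (qᵢ))`, with `exp` bounded by its
chord on `[0, 4kT/m]`) bounds each deviation probability by `exp (-(7/72) ε² m/k)` or
`exp (-m/(16k))`, both at most `(ε/(10k))⁴` for the given `m`, and a union bound over the
`k (ℓ_max + 6)` deviations gives `ε³/k³`.
-/

open Finset

noncomputable section

/-- The sensitivity sampling distribution `μ` on `P`. -/
noncomputable def sensμ {d k : ℕ} (P : Finset (Pt d)) (cl : Pt d → Fin k)
    (a : Fin k → Pt d) (p : Pt d) : ℝ :=
  let Cj : Fin k → Finset (Pt d) := fun j => P.filter fun x => cl x = j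
  let costC : Fin k → ℝ := fun j => ∑ x ∈ Cj j, ‖x - a j‖ ^ 2
  let costPA : ℝ := ∑ j : Fin k, costC j
  (1 / 4) * (1 / ((k : ℝ) * ((Cj (cl p)).card : ℝ))
    + ‖p - a (cl p)‖ ^ 2 / ((k : ℝ) * costC (cl p))
    + ‖p - a (cl p)‖ ^ 2 / costPA
    + (costC (cl p) / ((Cj (cl p)).card : ℝ)) / costPA)

/-- `ℓ_max = ⌊log₂(1/ε)⌋`. -/
def lmax (ε : ℝ) : ℕ := (Int.log 2 ε⁻¹).toNat

/-- `p` belongs to the ring `R_j(ℓ)` of cluster `C_j = {x ∈ P | cl x = j}`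
(with center `a j` and average cost `Δ_j`). -/
def inRing {d k : ℕ} (P : Finset (Pt d)) (cl : Pt d → Fin k) (a : Fin k → Pt d)
    (ε : ℝ) (j : Fin k) (ℓ : ℕ) (p : Pt d) : Prop :=
  let Δ : ℝ := (∑ x ∈ P.filter (fun x => cl x = j), ‖x - a j‖ ^ 2) /
      (((P.filter fun x => cl x = j).card : ℝ))
  cl p = j ∧
    ((ℓ = 0 ∧ ‖p - a j‖ ^ 2 < 2 * Δ) ∨
     (1 ≤ ℓ ∧ ℓ ≤ lmax ε ∧
        2 ^ ℓ * Δ ≤ ‖p - a j‖ ^ 2 ∧ ‖p - a j‖ ^ 2 < 2 ^ (ℓ + 1) * Δ) ∨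
     (ℓ = lmax ε + 1 ∧ 2 ^ (lmax ε + 1) * Δ ≤ ‖p - a j‖ ^ 2))

/-- Event `E` for the weighted i.i.d. sample `q : Fin m → P` with weights
`w i = 1/(m·μ(q_i))`: (P1) cluster sizes, (P2) ring sizes and (P3) cluster costs
are preserved. -/
def EventE {d k : ℕ} (P : Finset (Pt d)) (cl : Pt d → Fin k) (a : Fin k → Pt d)
    (ε : ℝ) (m : ℕ) (q : Fin m → {x // x ∈ P}) : Prop :=
  let w : Fin m → ℝ := fun i => 1 / ((m : ℝ) * sensμ P cl a (q i).1)
  -- (P1) cluster size preservation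
  (∀ j : Fin k,
    (1 - ε) * (((P.filter fun p => cl p = j).card : ℝ))
        ≤ (∑ i : Fin m, Set.indicator {i : Fin m | cl (q i).1 = j} w i) ∧
    (∑ i : Fin m, Set.indicator {i : Fin m | cl (q i).1 = j} w i)
        ≤ (1 + ε) * (((P.filter fun p => cl p = j).card : ℝ))) ∧
  -- (P2) ring size preservation
  (∀ j : Fin k, ∀ ℓ ≤ lmax ε + 1,
    (∑ i : Fin m, Set.indicator {i : Fin m | inRing P cl a ε j ℓ (q i).1} w i)
      ≤ (((P.filter fun p => cl p = j).card : ℝ)) / 2 ^ ((ℓ : ℤ) - 1)) ∧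
  -- (P3) cluster cost preservation
  (∀ j : Fin k,
    (1 - ε) * (∑ p ∈ P.filter (fun p => cl p = j), ‖p - a j‖ ^ 2)
        ≤ (∑ i : Fin m, Set.indicator {i : Fin m | cl (q i).1 = j}
            (fun i => w i * ‖(q i).1 - a j‖ ^ 2) i) ∧
    (∑ i : Fin m, Set.indicator {i : Fin m | cl (q i).1 = j}
            (fun i => w i * ‖(q i).1 - a j‖ ^ 2) i)
        ≤ (1 + ε) * (∑ p ∈ P.filter (fun p => cl p = j), ‖p - a j‖ ^ 2))

namespace SensitivitySampling

open Real

section Sampling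

variable {α : Type*} [Fintype α] {μ : α → ℝ} {m : ℕ}

def sampleProb (μ : α → ℝ) (m : ℕ) (S : Set (Fin m → α)) : ℝ :=
  ∑ q, S.indicator (fun q => ∏ i, μ (q i)) q

lemma sampleProb_univ (hμ1 : ∑ p, μ p = 1) : sampleProb μ m Set.univ = 1 := by
  simp only [sampleProb, Set.indicator_univ, ← Fintype.sum_pow, hμ1, one_pow]

lemma sampleProb_compl (hμ1 : ∑ p, μ p = 1) (S : Set (Fin m → α)) :
    sampleProb μ m Sᶜ = 1 - sampleProb μ m S := by
  rw [← sampleProb_univ hμ1, sampleProb, sampleProb, sampleProb, ← Finset.sum_sub_distrib]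
  simp only [Set.indicator_compl, Set.indicator_univ, Pi.sub_apply]

lemma sampleProb_mono (hμ0 : ∀ p, 0 ≤ μ p) {S T : Set (Fin m → α)} (h : S ⊆ T) :
    sampleProb μ m S ≤ sampleProb μ m T :=
  Finset.sum_le_sum fun q _ =>
    Set.indicator_le_indicator_of_subset h (fun q => Finset.prod_nonneg fun i _ => hμ0 (q i)) q

lemma sampleProb_union_le (hμ0 : ∀ p, 0 ≤ μ p) (S T : Set (Fin m → α)) :
    sampleProb μ m (S ∪ T) ≤ sampleProb μ m S + sampleProb μ m T := by
  rw [sampleProb, sampleProb, sampleProb, ← Finset.sum_add_distrib]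
  refine Finset.sum_le_sum fun q _ => ?_
  rw [← Set.indicator_union_add_inter_apply]
  exact le_add_of_nonneg_right
    (Set.indicator_nonneg (fun q _ => Finset.prod_nonneg fun i _ => hμ0 (q i)) q)

lemma sampleProb_biUnion_le (hμ0 : ∀ p, 0 ≤ μ p) {ι : Type*} (s : Finset ι)
    (S : ι → Set (Fin m → α)) :
    sampleProb μ m (⋃ i ∈ s, S i) ≤ ∑ i ∈ s, sampleProb μ m (S i) := by
  classical
  induction s using Finset.induction_on with
  | empty => simp [sampleProb]
  | insert i s _ ih =>
    rw [Finset.set_biUnion_insert, Finset.sum_insert ‹_›]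
    exact (sampleProb_union_le hμ0 _ _).trans (add_le_add_right ih _)

lemma sum_exp_mul_sum_mul_prod (f : α → ℝ) (c : ℝ) :
    ∑ q : Fin m → α, exp (c * ∑ i, f (q i)) * ∏ i, μ (q i)
      = (∑ p, μ p * exp (c * f p)) ^ m := by
  rw [Fintype.sum_pow]
  refine Finset.sum_congr rfl fun q _ => ?_
  rw [Finset.mul_sum, exp_sum, ← Finset.prod_mul_distrib]
  simp only [mul_comm]

lemma exp_mul_le_chord {c B x : ℝ} (hB : 0 < B) (hx0 : 0 ≤ x) (hxB : x ≤ B) :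
    exp (c * x) ≤ 1 + x / B * (exp (c * B) - 1) := by
  have h := convexOn_exp.2 (Set.mem_univ 0) (Set.mem_univ (c * B))
    (sub_nonneg.2 ((div_le_one hB).2 hxB)) (div_nonneg hx0 hB.le) (sub_add_cancel 1 (x / B))
  have hx : x / B * (c * B) = c * x := by field_simp
  simp only [smul_eq_mul, mul_zero, zero_add, exp_zero, hx] at h
  linarith

lemma sum_mul_exp_mul_le_exp (hμ0 : ∀ p, 0 ≤ μ p) (hμ1 : ∑ p, μ p = 1) {f : α → ℝ} {B : ℝ}
    (hB : 0 < B) (hf0 : ∀ p, 0 ≤ f p) (hfB : ∀ p, f p ≤ B) (c : ℝ) :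
    ∑ p, μ p * exp (c * f p) ≤ exp ((exp (c * B) - 1) / B * ∑ p, μ p * f p) :=
  calc ∑ p, μ p * exp (c * f p)
      ≤ ∑ p, (μ p + (exp (c * B) - 1) / B * (μ p * f p)) :=
        Finset.sum_le_sum fun p _ => by
          have h := mul_le_mul_of_nonneg_left (exp_mul_le_chord (c := c) hB (hf0 p) (hfB p)) (hμ0 p)
          linarith [show μ p * (1 + f p / B * (exp (c * B) - 1))
            = μ p + (exp (c * B) - 1) / B * (μ p * f p) by ring]
    _ = 1 + (exp (c * B) - 1) / B * ∑ p, μ p * f p := by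
        rw [Finset.sum_add_distrib, hμ1, Finset.mul_sum]
    _ ≤ _ := by linarith [add_one_le_exp ((exp (c * B) - 1) / B * ∑ p, μ p * f p)]

lemma sampleProb_le_exp_neg_mul_pow (hμ0 : ∀ p, 0 ≤ μ p) {f : α → ℝ} {s c : ℝ}
    {S : Set (Fin m → α)} (hS : ∀ q ∈ S, s ≤ c * ∑ i, f (q i)) :
    sampleProb μ m S ≤ exp (-s) * (∑ p, μ p * exp (c * f p)) ^ m := by
  rw [← sum_exp_mul_sum_mul_prod, Finset.mul_sum]
  refine Finset.sum_le_sum fun q _ => ?_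
  have hW : 0 ≤ ∏ i, μ (q i) := Finset.prod_nonneg fun i _ => hμ0 (q i)
  refine Set.indicator_apply_le' (fun hq => ?_) (fun _ => by positivity)
  have h1 : 1 ≤ exp (-s) * exp (c * ∑ i, f (q i)) := by
    rw [← exp_add]
    exact one_le_exp (by linarith [hS q hq])
  nlinarith

lemma sampleProb_le_exp_of_le_mul_sum (hμ0 : ∀ p, 0 ≤ μ p) (hμ1 : ∑ p, μ p = 1)
    {f : α → ℝ} {B s c : ℝ}
    (hB : 0 < B) (hf0 : ∀ p, 0 ≤ f p) (hfB : ∀ p, f p ≤ B)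
    {S : Set (Fin m → α)} (hS : ∀ q ∈ S, s ≤ c * ∑ i, f (q i)) :
    sampleProb μ m S ≤ exp (-s + m * ((exp (c * B) - 1) / B * ∑ p, μ p * f p)) := by
  calc sampleProb μ m S ≤ exp (-s) * (∑ p, μ p * exp (c * f p)) ^ m :=
        sampleProb_le_exp_neg_mul_pow hμ0 hS
    _ ≤ exp (-s) * exp ((exp (c * B) - 1) / B * ∑ p, μ p * f p) ^ m := by
        gcongr
        · exact Finset.sum_nonneg fun p _ => mul_nonneg (hμ0 p) (exp_nonneg _)
        · exact sum_mul_exp_mul_le_exp hμ0 hμ1 hB hf0 hfB c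
    _ = _ := by rw [← exp_nat_mul, ← exp_add]

lemma exp_le_one_add_add_sq {x : ℝ} (hx : |x| ≤ 1 / 2) : exp x ≤ 1 + x + 11 / 18 * x ^ 2 := by
  have h := (abs_le.1 (exp_bound (hx.trans (by norm_num)) (n := 3) (by norm_num))).2
  have hx3 : |x| ^ 3 ≤ x ^ 2 / 2 := by
    rw [pow_succ, ← sq_abs x]
    exact mul_le_mul_of_nonneg_left hx (sq_nonneg _) |>.trans_eq (by ring)
  norm_num [Finset.sum_range_succ, Nat.factorial] at h
  nlinarith

section Tails

variable (hμ0 : ∀ p, 0 ≤ μ p) (hμ1 : ∑ p, μ p = 1) {f : α → ℝ} {B T δ : ℝ}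
  (hB : 0 < B) (hf0 : ∀ p, 0 ≤ f p) (hfB : ∀ p, f p ≤ B)
include hμ0 hμ1 hB hf0 hfB

lemma sampleProb_upper_tail (hδ : 0 ≤ δ) (hmean : m * ∑ p, μ p * f p ≤ T) :
    sampleProb μ m {q | (1 + δ) * T ≤ ∑ i, f (q i)}
      ≤ exp (T / B * (exp δ - 1 - δ - δ ^ 2)) := by
  have hcB : δ / B * B = δ := by field_simp
  refine (sampleProb_le_exp_of_le_mul_sum hμ0 hμ1 hB hf0 hfB
    (s := δ / B * ((1 + δ) * T)) (c := δ / B)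
    fun q hq => mul_le_mul_of_nonneg_left hq (by positivity)).trans (exp_le_exp.2 ?_)
  have he : 0 ≤ (exp δ - 1) / B := div_nonneg (by linarith [one_le_exp hδ]) hB.le
  rw [hcB]
  calc -(δ / B * ((1 + δ) * T)) + m * ((exp δ - 1) / B * ∑ p, μ p * f p)
      = -(δ / B * ((1 + δ) * T)) + (exp δ - 1) / B * (m * ∑ p, μ p * f p) := by ring
    _ ≤ -(δ / B * ((1 + δ) * T)) + (exp δ - 1) / B * T := by gcongr
    _ = T / B * (exp δ - 1 - δ - δ ^ 2) := by ring

lemma sampleProb_lower_tail (hδ : 0 ≤ δ) (hmean : T ≤ m * ∑ p, μ p * f p) :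
    sampleProb μ m {q | ∑ i, f (q i) ≤ (1 - δ) * T}
      ≤ exp (T / B * (exp (-δ) - 1 + δ - δ ^ 2)) := by
  have hcB : -δ / B * B = -δ := by field_simp
  refine (sampleProb_le_exp_of_le_mul_sum hμ0 hμ1 hB hf0 hfB
    (s := -δ / B * ((1 - δ) * T)) (c := -δ / B)
    fun q hq => mul_le_mul_of_nonpos_left hq
      (div_nonpos_of_nonpos_of_nonneg (neg_nonpos.2 hδ) hB.le)).trans (exp_le_exp.2 ?_)
  have he : (exp (-δ) - 1) / B ≤ 0 :=
    div_nonpos_of_nonpos_of_nonneg (by linarith [exp_le_one_iff.2 (neg_nonpos.2 hδ)]) hB.le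
  rw [hcB]
  calc -(-δ / B * ((1 - δ) * T)) + m * ((exp (-δ) - 1) / B * ∑ p, μ p * f p)
      = -(-δ / B * ((1 - δ) * T)) + (exp (-δ) - 1) / B * (m * ∑ p, μ p * f p) := by ring
    _ ≤ -(-δ / B * ((1 - δ) * T)) + (exp (-δ) - 1) / B * T :=
        add_le_add_right (mul_le_mul_of_nonpos_left hmean he) _
    _ = T / B * (exp (-δ) - 1 + δ - δ ^ 2) := by ring

lemma sampleProb_notMem_Icc_le (hδ0 : 0 ≤ δ) (hδ1 : δ ≤ 1 / 2) (hT : 0 ≤ T)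
    (hmean : m * ∑ p, μ p * f p = T) :
    sampleProb μ m {q | ∑ i, f (q i) ∉ Set.Icc ((1 - δ) * T) ((1 + δ) * T)}
      ≤ 2 * exp (-(7 / 18) * δ ^ 2 * (T / B)) := by
  have hTB : 0 ≤ T / B := div_nonneg hT hB.le
  have hup := exp_le_one_add_add_sq (x := δ) (by rw [abs_of_nonneg hδ0]; exact hδ1)
  have hlow := exp_le_one_add_add_sq (x := -δ) (by rw [abs_neg, abs_of_nonneg hδ0]; exact hδ1)
  have hsub : {q : Fin m → α | ∑ i, f (q i) ∉ Set.Icc ((1 - δ) * T) ((1 + δ) * T)}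
      ⊆ {q | ∑ i, f (q i) ≤ (1 - δ) * T} ∪ {q | (1 + δ) * T ≤ ∑ i, f (q i)} := by
    intro q hq
    rcases not_and_or.1 hq with h | h
    exacts [Or.inl (not_le.1 h).le, Or.inr (not_le.1 h).le]
  calc _ ≤ _ := sampleProb_mono hμ0 hsub
    _ ≤ _ := sampleProb_union_le hμ0 _ _
    _ ≤ exp (-(7 / 18) * δ ^ 2 * (T / B)) + exp (-(7 / 18) * δ ^ 2 * (T / B)) := by
        gcongr
        · refine (sampleProb_lower_tail hμ0 hμ1 hB hf0 hfB hδ0 hmean.ge).trans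
            (exp_le_exp.2 ?_)
          nlinarith
        · refine (sampleProb_upper_tail hμ0 hμ1 hB hf0 hfB hδ0 hmean.le).trans
            (exp_le_exp.2 ?_)
          nlinarith
    _ = _ := by ring

lemma sampleProb_two_mul_le (hT : 0 ≤ T) (hmean : m * ∑ p, μ p * f p ≤ T) :
    sampleProb μ m {q | 2 * T ≤ ∑ i, f (q i)} ≤ exp (-(T / B) / 4) := by
  have h := sampleProb_upper_tail hμ0 hμ1 hB hf0 hfB zero_le_one hmean
  rw [one_add_one_eq_two] at h
  refine h.trans (exp_le_exp.2 ?_)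
  nlinarith [exp_one_lt_d9, div_nonneg hT hB.le]

end Tails

end Sampling

section Clusters

variable {d k : ℕ} (P : Finset (Pt d)) (cl : Pt d → Fin k) (a : Fin k → Pt d)

def clusterSize (j : Fin k) : ℝ := ((P.filter fun x => cl x = j).card : ℝ)

def clusterCost (j : Fin k) : ℝ := ∑ x ∈ P.filter (fun x => cl x = j), ‖x - a j‖ ^ 2

def totalCost : ℝ := ∑ j, clusterCost P cl a j

lemma sensμ_eq (x : Pt d) :
    sensμ P cl a x = 1 / 4 * (1 / (k * clusterSize P cl (cl x))
      + ‖x - a (cl x)‖ ^ 2 / (k * clusterCost P cl a (cl x))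
      + ‖x - a (cl x)‖ ^ 2 / totalCost P cl a
      + clusterCost P cl a (cl x) / clusterSize P cl (cl x) / totalCost P cl a) := rfl

variable {P cl a} (hpos : ∀ j, 0 < clusterCost P cl a j)
include hpos

lemma clusterSize_pos (j : Fin k) : 0 < clusterSize P cl j := by
  unfold clusterSize
  exact_mod_cast Finset.card_pos.2 (Finset.nonempty_of_sum_ne_zero (hpos j).ne')

lemma totalCost_pos : 0 < totalCost P cl a :=
  (hpos (cl 0)).trans_le
    (Finset.single_le_sum (fun j _ => (hpos j).le) (Finset.mem_univ (cl 0)))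

lemma sensμ_terms_nonneg (x : Pt d) :
    0 ≤ 1 / (k * clusterSize P cl (cl x)) ∧
      0 ≤ ‖x - a (cl x)‖ ^ 2 / (k * clusterCost P cl a (cl x)) ∧
      0 ≤ ‖x - a (cl x)‖ ^ 2 / totalCost P cl a ∧
      0 ≤ clusterCost P cl a (cl x) / clusterSize P cl (cl x) / totalCost P cl a := by
  have := clusterSize_pos hpos (cl x)
  have := hpos (cl x)
  have := totalCost_pos hpos
  refine ⟨?_, ?_, ?_, ?_⟩ <;> positivity

lemma one_div_le_sensμ (x : Pt d) : 1 / (4 * k * clusterSize P cl (cl x)) ≤ sensμ P cl a x := by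
  obtain ⟨-, h₂, h₃, h₄⟩ := sensμ_terms_nonneg hpos x
  rw [sensμ_eq, show 1 / (4 * k * clusterSize P cl (cl x))
    = 1 / 4 * (1 / (k * clusterSize P cl (cl x))) by ring]
  linarith

lemma cost_div_le_sensμ (x : Pt d) :
    ‖x - a (cl x)‖ ^ 2 / (4 * k * clusterCost P cl a (cl x)) ≤ sensμ P cl a x := by
  obtain ⟨h₁, -, h₃, h₄⟩ := sensμ_terms_nonneg hpos x
  rw [sensμ_eq, show ‖x - a (cl x)‖ ^ 2 / (4 * k * clusterCost P cl a (cl x))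
    = 1 / 4 * (‖x - a (cl x)‖ ^ 2 / (k * clusterCost P cl a (cl x))) by ring]
  linarith

lemma sensμ_pos (x : Pt d) : 0 < sensμ P cl a x := by
  have := clusterSize_pos hpos (cl x)
  have hk : (0 : ℝ) < k := Nat.cast_pos.2 (Fin.pos (cl x))
  exact lt_of_lt_of_le (by positivity) (one_div_le_sensμ hpos x)

lemma sum_sensμ : ∑ x ∈ P, sensμ P cl a x = 1 := by
  have hk : (k : ℝ) ≠ 0 := (Nat.cast_pos.2 (Fin.pos (cl 0))).ne'
  have hP := (totalCost_pos hpos).ne'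
  have hcluster : ∀ j, ∑ x ∈ P.filter (fun x => cl x = j), sensμ P cl a x
      = 1 / (2 * k) + clusterCost P cl a j / (2 * totalCost P cl a) := by
    intro j
    have hn := (clusterSize_pos hpos j).ne'
    have hc := (hpos j).ne'
    have haffine : ∀ x ∈ P.filter (fun x => cl x = j), sensμ P cl a x
        = 1 / 4 * (1 / (k * clusterSize P cl j)
            + clusterCost P cl a j / clusterSize P cl j / totalCost P cl a)
          + 1 / 4 * (1 / (k * clusterCost P cl a j) + 1 / totalCost P cl a) * ‖x - a j‖ ^ 2 := by
      intro x hx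
      rw [sensμ_eq, (Finset.mem_filter.1 hx).2]
      ring
    rw [Finset.sum_congr rfl haffine, Finset.sum_add_distrib, Finset.sum_const, ← Finset.mul_sum,
      nsmul_eq_mul]
    change clusterSize P cl j * _ + _ * clusterCost P cl a j = _
    field_simp
    ring
  rw [← Finset.sum_fiberwise P cl, Finset.sum_congr rfl fun j _ => hcluster j,
    Finset.sum_add_distrib, Finset.sum_const, ← Finset.sum_div, Finset.card_univ,
    Fintype.card_fin, nsmul_eq_mul]
  change _ + totalCost P cl a / _ = _
  field_simp
  ring

lemma sum_sensμ_coe : ∑ p : {x // x ∈ P}, sensμ P cl a p.1 = 1 :=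
  (Finset.sum_coe_sort P _).trans (sum_sensμ hpos)

end Clusters

section Estimates

variable {d k : ℕ} (P : Finset (Pt d)) (cl : Pt d → Fin k) (a : Fin k → Pt d)

def weight (m : ℕ) (x : Pt d) : ℝ := 1 / (m * sensμ P cl a x)

-- `estimate P cl a s g q` is the weighted sum `∑_{q ∈ Ω ∩ s} w_q g(q)` of the paper.
def estimate {m : ℕ} (s : Set (Pt d)) (g : Pt d → ℝ) (q : Fin m → {x // x ∈ P}) : ℝ :=
  ∑ i, s.indicator (fun x => weight P cl a m x * g x) (q i).1

variable {P cl a} (hpos : ∀ j, 0 < clusterCost P cl a j) {m : ℕ}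
include hpos

lemma sensμ_mul_weight (x : Pt d) : sensμ P cl a x * weight P cl a m x = 1 / m := by
  rw [weight, one_div, one_div, mul_inv, mul_left_comm, mul_inv_cancel₀ (sensμ_pos hpos x).ne',
    mul_one]

lemma mul_sum_sensμ_mul_indicator (hm : m ≠ 0) (s : Set (Pt d)) (g : Pt d → ℝ) :
    (m : ℝ) * ∑ p : {x // x ∈ P},
        sensμ P cl a p.1 * s.indicator (fun x => weight P cl a m x * g x) p.1
      = ∑ x ∈ P, s.indicator g x := by
  rw [Finset.sum_coe_sort P
    (fun x => sensμ P cl a x * s.indicator (fun x => weight P cl a m x * g x) x), Finset.mul_sum]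
  refine Finset.sum_congr rfl fun x _ => ?_
  by_cases hx : x ∈ s
  · rw [Set.indicator_of_mem hx, Set.indicator_of_mem hx, ← mul_assoc (sensμ P cl a x),
      sensμ_mul_weight hpos, ← mul_assoc, mul_one_div_cancel (Nat.cast_ne_zero.2 hm), one_mul]
  · simp [Set.indicator_of_notMem hx]

lemma indicator_weight_mul_nonneg {s : Set (Pt d)} {g : Pt d → ℝ} (hg : ∀ x, 0 ≤ g x)
    (x : Pt d) : 0 ≤ s.indicator (fun x => weight P cl a m x * g x) x :=
  Set.indicator_nonneg (fun x _ => mul_nonneg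
    (one_div_nonneg.2 (mul_nonneg m.cast_nonneg (sensμ_pos hpos x).le)) (hg x)) x

lemma indicator_weight_mul_le (hm : 0 < m) {s : Set (Pt d)} {g : Pt d → ℝ} {T : ℝ} (hT : 0 < T)
    (hμ : ∀ x ∈ s, g x / (4 * k * T) ≤ sensμ P cl a x) (x : Pt d) :
    s.indicator (fun x => weight P cl a m x * g x) x ≤ 4 * k * T / m := by
  have hk : (0 : ℝ) < k := Nat.cast_pos.2 (Fin.pos (cl x))
  refine Set.indicator_apply_le' (fun hx => ?_) (fun _ => by positivity)
  have hμx := sensμ_pos hpos x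
  have h := (div_le_iff₀ (by positivity)).1 (hμ x hx)
  rw [weight, one_div_mul_eq_div, div_le_div_iff₀ (by positivity) (by positivity)]
  nlinarith

lemma sampleProb_estimate_notMem_Icc_le (hm : 0 < m) {δ : ℝ} (hδ0 : 0 ≤ δ) (hδ1 : δ ≤ 1 / 2)
    {s : Set (Pt d)} {g : Pt d → ℝ} {T : ℝ} (hT : 0 < T) (hg : ∀ x, 0 ≤ g x)
    (hμ : ∀ x ∈ s, g x / (4 * k * T) ≤ sensμ P cl a x) (hsum : ∑ x ∈ P, s.indicator g x = T) :
    sampleProb (fun p : {x // x ∈ P} => sensμ P cl a p.1) m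
        {q | estimate P cl a s g q ∉ Set.Icc ((1 - δ) * T) ((1 + δ) * T)}
      ≤ 2 * exp (-(7 / 72) * δ ^ 2 * (m / k)) := by
  have hk : (0 : ℝ) < k := Nat.cast_pos.2 (Fin.pos (cl 0))
  have hTB : T / (4 * k * T / m) = m / (4 * k) := by field_simp
  have h := sampleProb_notMem_Icc_le (μ := fun p : {x // x ∈ P} => sensμ P cl a p.1)
    (fun p => (sensμ_pos hpos p.1).le) (sum_sensμ_coe hpos)
    (by positivity) (fun p => indicator_weight_mul_nonneg hpos hg p.1)
    (fun p => indicator_weight_mul_le hpos hm hT hμ p.1) hδ0 hδ1 hT.le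
    ((mul_sum_sensμ_mul_indicator hpos hm.ne' s g).trans hsum)
  rw [hTB] at h
  exact h.trans_eq (by ring_nf)

lemma sampleProb_two_mul_le_estimate_le (hm : 0 < m) {s : Set (Pt d)} {g : Pt d → ℝ} {T : ℝ}
    (hT : 0 < T) (hg : ∀ x, 0 ≤ g x) (hμ : ∀ x ∈ s, g x / (4 * k * T) ≤ sensμ P cl a x)
    (hsum : ∑ x ∈ P, s.indicator g x ≤ T) :
    sampleProb (fun p : {x // x ∈ P} => sensμ P cl a p.1) m {q | 2 * T ≤ estimate P cl a s g q}
      ≤ exp (-(m / k) / 16) := by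
  have hk : (0 : ℝ) < k := Nat.cast_pos.2 (Fin.pos (cl 0))
  have hTB : T / (4 * k * T / m) = m / (4 * k) := by field_simp
  have h := sampleProb_two_mul_le (μ := fun p : {x // x ∈ P} => sensμ P cl a p.1)
    (fun p => (sensμ_pos hpos p.1).le) (sum_sensμ_coe hpos)
    (by positivity) (fun p => indicator_weight_mul_nonneg hpos hg p.1)
    (fun p => indicator_weight_mul_le hpos hm hT hμ p.1) hT.le
    ((mul_sum_sensμ_mul_indicator hpos hm.ne' s g).trans_le hsum)
  rw [hTB] at h
  exact h.trans_eq (by ring_nf)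

end Estimates

section Rings

variable {d k : ℕ} {P : Finset (Pt d)} {cl : Pt d → Fin k} {a : Fin k → Pt d}

lemma sum_indicator_cluster (g : Pt d → ℝ) (j : Fin k) :
    ∑ x ∈ P, {x | cl x = j}.indicator g x = ∑ x ∈ P.filter (fun x => cl x = j), g x := by
  simp only [Set.indicator_apply, Set.mem_ofPred_eq, Finset.sum_filter]

lemma sum_indicator_cluster_one (j : Fin k) :
    ∑ x ∈ P, {x | cl x = j}.indicator 1 x = clusterSize P cl j := by
  simp [sum_indicator_cluster, clusterSize]

lemma two_pow_mul_le_of_inRing {ε : ℝ} {j : Fin k} {ℓ : ℕ} {x : Pt d}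
    (h : inRing P cl a ε j ℓ x) (hℓ : 1 ≤ ℓ) :
    2 ^ ℓ * (clusterCost P cl a j / clusterSize P cl j) ≤ ‖x - a j‖ ^ 2 := by
  rcases h.2 with ⟨rfl, -⟩ | ⟨-, -, hcost, -⟩ | ⟨rfl, hcost⟩
  · omega
  · exact hcost
  · exact hcost

variable (hpos : ∀ j, 0 < clusterCost P cl a j)
include hpos

lemma sum_indicator_ring_le (ε : ℝ) (j : Fin k) (ℓ : ℕ) :
    ∑ x ∈ P, {x | inRing P cl a ε j ℓ x}.indicator 1 x ≤ clusterSize P cl j / 2 ^ ℓ := by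
  have hn := clusterSize_pos hpos j
  rcases Nat.eq_zero_or_pos ℓ with rfl | hℓ
  · rw [pow_zero, div_one, ← sum_indicator_cluster_one]
    exact Finset.sum_le_sum fun x _ =>
      Set.indicator_le_indicator_of_subset (fun x hx => hx.1) (fun _ => zero_le_one) x
  · set S := ∑ x ∈ P, {x | inRing P cl a ε j ℓ x}.indicator (1 : Pt d → ℝ) x
    have hmarkov : ∑ x ∈ P, 2 ^ ℓ * (clusterCost P cl a j / clusterSize P cl j)
          * {x | inRing P cl a ε j ℓ x}.indicator 1 x
        ≤ ∑ x ∈ P, {x | cl x = j}.indicator (fun x => ‖x - a j‖ ^ 2) x := by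
      refine Finset.sum_le_sum fun x _ => ?_
      by_cases hx : inRing P cl a ε j ℓ x
      · rw [Set.indicator_of_mem (show x ∈ {x | inRing P cl a ε j ℓ x} from hx),
          Set.indicator_of_mem (show x ∈ {x | cl x = j} from hx.1), Pi.one_apply, mul_one]
        exact two_pow_mul_le_of_inRing hx hℓ
      · rw [Set.indicator_of_notMem (show x ∉ {x | inRing P cl a ε j ℓ x} from hx), mul_zero]
        exact Set.indicator_nonneg (fun _ _ => sq_nonneg _) x
    rw [← Finset.mul_sum, sum_indicator_cluster] at hmarkov
    change _ * S ≤ clusterCost P cl a j at hmarkov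
    have hc := hpos j
    rw [le_div_iff₀ (by positivity)]
    have : 2 ^ ℓ * (clusterCost P cl a j / clusterSize P cl j) * S * clusterSize P cl j
        = clusterCost P cl a j * (S * 2 ^ ℓ) := by
      field_simp
    nlinarith [mul_le_mul_of_nonneg_right hmarkov hn.le]

lemma le_sensμ_of_inRing {ε : ℝ} {j : Fin k} {ℓ : ℕ} {x : Pt d} (h : inRing P cl a ε j ℓ x) :
    1 / (4 * k * (clusterSize P cl j / 2 ^ ℓ)) ≤ sensμ P cl a x := by
  have hn := clusterSize_pos hpos j
  have hk : (0 : ℝ) < k := Nat.cast_pos.2 (Fin.pos j)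
  have hcl : cl x = j := h.1
  rcases Nat.eq_zero_or_pos ℓ with rfl | hℓ
  · simpa [hcl] using one_div_le_sensμ hpos x
  · refine le_trans ?_ (cost_div_le_sensμ hpos x)
    rw [hcl, le_div_iff₀ (by have := hpos j; positivity)]
    calc 1 / (4 * k * (clusterSize P cl j / 2 ^ ℓ)) * (4 * k * clusterCost P cl a j)
        = 2 ^ ℓ * (clusterCost P cl a j / clusterSize P cl j) := by field_simp
      _ ≤ ‖x - a j‖ ^ 2 := two_pow_mul_le_of_inRing h hℓ

end Rings

section Failure

variable {d k : ℕ} (P : Finset (Pt d)) (cl : Pt d → Fin k) (a : Fin k → Pt d) (ε : ℝ) (m : ℕ)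

lemma eventE_iff (q : Fin m → {x // x ∈ P}) :
    EventE P cl a ε m q ↔ ∀ j,
      estimate P cl a {x | cl x = j} 1 q
          ∈ Set.Icc ((1 - ε) * clusterSize P cl j) ((1 + ε) * clusterSize P cl j) ∧
      (∀ ℓ ≤ lmax ε + 1, estimate P cl a {x | inRing P cl a ε j ℓ x} 1 q
          ≤ clusterSize P cl j / 2 ^ ((ℓ : ℤ) - 1)) ∧
      estimate P cl a {x | cl x = j} (fun x => ‖x - a j‖ ^ 2) q
          ∈ Set.Icc ((1 - ε) * clusterCost P cl a j) ((1 + ε) * clusterCost P cl a j) := by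
  simp only [estimate, Pi.one_apply, mul_one, forall_and]
  rfl

def clusterFailure (j : Fin k) : Set (Fin m → {x // x ∈ P}) :=
  {q | estimate P cl a {x | cl x = j} 1 q
      ∉ Set.Icc ((1 - ε) * clusterSize P cl j) ((1 + ε) * clusterSize P cl j)} ∪
    (⋃ ℓ ∈ Finset.range (lmax ε + 2), {q | clusterSize P cl j / 2 ^ ((ℓ : ℤ) - 1)
      < estimate P cl a {x | inRing P cl a ε j ℓ x} 1 q}) ∪
    {q | estimate P cl a {x | cl x = j} (fun x => ‖x - a j‖ ^ 2) q
      ∉ Set.Icc ((1 - ε) * clusterCost P cl a j) ((1 + ε) * clusterCost P cl a j)}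

lemma compl_setOf_eventE_subset :
    {q | EventE P cl a ε m q}ᶜ
      ⊆ ⋃ j ∈ (Finset.univ : Finset (Fin k)), clusterFailure P cl a ε m j := by
  intro q hq
  obtain ⟨j, hj⟩ := not_forall.1 (mt (eventE_iff P cl a ε m q).2 hq)
  refine Set.mem_biUnion (Finset.mem_coe.2 (Finset.mem_univ j)) ?_
  by_contra hq'
  simp only [clusterFailure, Set.mem_union, Set.mem_iUnion, Set.mem_ofPred_eq, not_or, not_not,
    not_exists, not_lt] at hq'
  exact hj ⟨hq'.1.1, fun ℓ hℓ => hq'.1.2 ℓ (Finset.mem_range.2 (by omega)), hq'.2⟩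

variable {P cl a ε m}

lemma sampleProb_clusterFailure_le (hpos : ∀ j, 0 < clusterCost P cl a j) (hm : 0 < m)
    (hε0 : 0 < ε) (hε1 : ε ≤ 1 / 2) (j : Fin k) :
    sampleProb (fun p : {x // x ∈ P} => sensμ P cl a p.1) m (clusterFailure P cl a ε m j)
      ≤ 4 * exp (-(7 / 72) * ε ^ 2 * (m / k)) + (lmax ε + 2) * exp (-(m / k) / 16) := by
  have hμ0 : ∀ p : {x // x ∈ P}, 0 ≤ sensμ P cl a p.1 := fun p => (sensμ_pos hpos p.1).le
  have hn := clusterSize_pos hpos j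
  have hsize := sampleProb_estimate_notMem_Icc_le hpos hm hε0.le hε1 (s := {x | cl x = j})
    (g := 1) hn (fun _ => zero_le_one)
    (fun x hx => by rw [Pi.one_apply, ← show cl x = j from hx]; exact one_div_le_sensμ hpos x)
    (sum_indicator_cluster_one j)
  have hcost := sampleProb_estimate_notMem_Icc_le hpos hm hε0.le hε1 (s := {x | cl x = j})
    (g := fun x => ‖x - a j‖ ^ 2) (hpos j) (fun _ => sq_nonneg _)
    (fun x hx => by rw [← show cl x = j from hx]; exact cost_div_le_sensμ hpos x)
    (sum_indicator_cluster _ j)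
  have hring : ∀ ℓ ∈ Finset.range (lmax ε + 2),
      sampleProb (fun p : {x // x ∈ P} => sensμ P cl a p.1) m {q | clusterSize P cl j /
        2 ^ ((ℓ : ℤ) - 1) < estimate P cl a {x | inRing P cl a ε j ℓ x} 1 q}
        ≤ exp (-(m / k) / 16) := by
    intro ℓ _
    have hthreshold :
        clusterSize P cl j / 2 ^ ((ℓ : ℤ) - 1) = 2 * (clusterSize P cl j / 2 ^ ℓ) := by
      rw [zpow_sub₀ two_ne_zero, zpow_one, zpow_natCast]
      field_simp
    simp only [hthreshold]
    refine (sampleProb_mono hμ0 ?_).trans (sampleProb_two_mul_le_estimate_le hpos hm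
      (s := {x | inRing P cl a ε j ℓ x}) (g := 1) (by positivity) (fun _ => zero_le_one)
      (fun x hx => le_sensμ_of_inRing hpos hx) (sum_indicator_ring_le hpos ε j ℓ))
    exact fun q hq => le_of_lt (Set.mem_ofPred.1 hq)
  calc _ ≤ _ := sampleProb_union_le hμ0 _ _
    _ ≤ _ := add_le_add_left (sampleProb_union_le hμ0 _ _) _
    _ ≤ _ := add_le_add_left (add_le_add_right (sampleProb_biUnion_le hμ0 _ _) _) _
    _ ≤ 2 * exp (-(7 / 72) * ε ^ 2 * (m / k)) + ∑ _ℓ ∈ Finset.range (lmax ε + 2),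
          exp (-(m / k) / 16) + 2 * exp (-(7 / 72) * ε ^ 2 * (m / k)) := by
        gcongr
        exact hring _ ‹_›
    _ = _ := by
        rw [Finset.sum_const, Finset.card_range, nsmul_eq_mul]
        push_cast
        ring

end Failure

section SampleSize

lemma lmax_le_inv {ε : ℝ} (hε : 0 < ε) : (lmax ε : ℝ) ≤ ε⁻¹ := by
  rcases le_or_gt (Int.log 2 ε⁻¹) 0 with h | h
  · rw [lmax, Int.toNat_eq_zero.2 h, Nat.cast_zero]
    positivity
  · have h2 := Int.zpow_log_le_self (b := 2) (by norm_num) (inv_pos.2 hε)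
    rw [← Int.toNat_of_nonneg h.le, zpow_natCast] at h2
    exact le_trans (by exact_mod_cast (Nat.lt_two_pow_self).le) h2

variable {k m : ℕ} {ε : ℝ} (hk : 0 < k) (hε0 : 0 < ε) (hε1 : ε ≤ 1 / 2)
include hk hε0 hε1

lemma log_ten_mul_mul_inv_pos : 0 < log (10 * k * ε⁻¹) := by
  have : (2 : ℝ) ≤ ε⁻¹ := by rw [← inv_inv (2 : ℝ)]; exact inv_anti₀ hε0 (by linarith)
  have : (1 : ℝ) ≤ k := by exact_mod_cast hk
  exact log_pos (by nlinarith)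

lemma four_log_le_of_sample_size
    (hm : 48 * (k : ℝ) * ε ^ (-2 : ℤ) * log (10 * k * ε⁻¹) ≤ m) :
    4 * log (10 * k * ε⁻¹) ≤ 7 / 72 * ε ^ 2 * (m / k) ∧
      4 * log (10 * k * ε⁻¹) ≤ (m / k) / 16 := by
  have hk' : (0 : ℝ) < k := Nat.cast_pos.2 hk
  have hL := log_ten_mul_mul_inv_pos hk hε0 hε1
  rw [zpow_neg, zpow_two, ← sq] at hm
  have hm' : 48 * log (10 * k * ε⁻¹) ≤ ε ^ 2 * (m / k) := by
    rw [mul_div_assoc', le_div_iff₀ hk']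
    have := mul_le_mul_of_nonneg_right hm (sq_nonneg ε)
    field_simp at this ⊢
    linarith
  have hε2 : ε ^ 2 ≤ 1 / 4 := by nlinarith
  constructor <;> nlinarith [mul_le_mul_of_nonneg_right hε2 (div_nonneg m.cast_nonneg hk'.le)]

lemma mul_lmax_add_six_mul_exp_le :
    k * ((lmax ε + 6) * exp (-(4 * log (10 * k * ε⁻¹)))) ≤ ε ^ 3 / k ^ 3 := by
  have hk' : (0 : ℝ) < k := Nat.cast_pos.2 hk
  have hexp : exp (-(4 * log (10 * k * ε⁻¹))) = ε ^ 4 / (10 ^ 4 * k ^ 4) := by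
    rw [show 4 * log (10 * k * ε⁻¹) = log ((10 * k * ε⁻¹) ^ 4) by rw [log_pow]; norm_num,
      exp_neg, exp_log (by positivity)]
    field_simp
  have hlmax : ε * lmax ε ≤ 1 := by
    have := mul_le_mul_of_nonneg_left (lmax_le_inv hε0) hε0.le
    rwa [mul_inv_cancel₀ hε0.ne'] at this
  have hε3 : 0 ≤ ε ^ 3 / k ^ 3 := by positivity
  calc _ = (ε * lmax ε + 6 * ε) * (ε ^ 3 / k ^ 3) / 10 ^ 4 := by
        rw [hexp]
        field_simp
    _ ≤ _ := by nlinarith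

end SampleSize

end SensitivitySampling

open SensitivitySampling

/-- If `m ≥ 48·k·ε^{-2}·log(10k·ε^{-1})`, then the sensitivity-sampling sample
satisfies event `E` with probability at least `1 − ε³/k³`. -/
theorem eventE_high_probability
    {d : ℕ} (k m : ℕ) (ε : ℝ) (P : Finset (Pt d)) (cl : Pt d → Fin k)
    (a : Fin k → Pt d)
    (hε0 : 0 < ε) (hε1 : ε ≤ 1 / 2)
    -- nondegeneracy: every cluster has positive cost
    (hpos : ∀ j : Fin k, 0 < ∑ p ∈ P.filter (fun p => cl p = j), ‖p - a j‖ ^ 2)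
    -- the number of samples
    (hm : 48 * (k : ℝ) * ε ^ (-2 : ℤ) * Real.log (10 * (k : ℝ) * ε⁻¹) ≤ (m : ℝ)) :
    1 - ε ^ 3 / (k : ℝ) ^ 3 ≤
      ∑ q : Fin m → {x // x ∈ P},
        Set.indicator {q : Fin m → {x // x ∈ P} | EventE P cl a ε m q}
          (fun q => ∏ i : Fin m, sensμ P cl a (q i).1) q := by
  have hk : 0 < k := Fin.pos (cl 0)
  have hcost : ∀ j, 0 < clusterCost P cl a j := hpos
  obtain ⟨hdeviation, hring⟩ := four_log_le_of_sample_size hk hε0 hε1 hm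
  have hm0 : 0 < m := by
    have : (0 : ℝ) < m / k := by linarith [log_ten_mul_mul_inv_pos hk hε0 hε1]
    exact_mod_cast (div_pos_iff_of_pos_right (Nat.cast_pos.2 hk)).1 this
  have hμ0 : ∀ p : {x // x ∈ P}, 0 ≤ sensμ P cl a p.1 := fun p => (sensμ_pos hcost p.1).le
  have hfail : sampleProb (fun p : {x // x ∈ P} => sensμ P cl a p.1) m
      {q | EventE P cl a ε m q}ᶜ ≤ ε ^ 3 / k ^ 3 :=
    calc _ ≤ ∑ j ∈ Finset.univ, sampleProb _ m (clusterFailure P cl a ε m j) :=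
          (sampleProb_mono hμ0 (compl_setOf_eventE_subset P cl a ε m)).trans
            (sampleProb_biUnion_le hμ0 _ _)
      _ ≤ ∑ _j : Fin k, (4 * Real.exp (-(4 * Real.log (10 * k * ε⁻¹)))
            + (lmax ε + 2) * Real.exp (-(4 * Real.log (10 * k * ε⁻¹)))) :=
          Finset.sum_le_sum fun j _ => (sampleProb_clusterFailure_le hcost hm0 hε0 hε1 j).trans
            (by gcongr <;> linarith)
      _ = k * ((lmax ε + 6) * Real.exp (-(4 * Real.log (10 * k * ε⁻¹)))) := by
          rw [Finset.sum_const, Finset.card_univ, Fintype.card_fin, nsmul_eq_mul]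
          ring
      _ ≤ _ := mul_lmax_add_six_mul_exp_le hk hε0 hε1
  rw [sampleProb_compl (sum_sensμ_coe hcost)] at hfail
  change _ ≤ sampleProb (fun p : {x // x ∈ P} => sensμ P cl a p.1) m {q | EventE P cl a ε m q}
  linarith
end
end
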